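/- arXiv:1002.3352 — 8 statements merged into one kernel-verified Lean document; each statement's English description precedes it below -/
import Mathlib

section
/- Let F be a functor from the category of compact Hausdorff spaces and continuous maps to itself which is monomorphic (F sends injective continuous maps to injective continuous maps) and has finite degree n (for every compact Hausdorff space X and every a ∈ F(X) there is a map f : A → X from a finite discrete space A of cardinality at most n with a in the range of F(f)), and suppose F applied to the n-point discrete space is a finite space. Then F preserves metrizability: if X is a metrizable compact Hausdorff space, then F(X) is metrizable. -/
/-!
Write `Δ` for the `n`-point discrete space. By the degree bound, every element of `F X` is
`F g d` with `g : Δ → X` and `d ∈ F Δ`, so for nonempty `X` the space `F X` is a continuous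
image of the compact metrizable space `X ^ Δ × F Δ`, and a Hausdorff continuous image of a
compact metrizable space is metrizable. For empty `X`, `F X` embeds into the finite space `F Δ`.

Continuity of `g ↦ F g d` along a sequence `u i → g` is the heart of the matter: the sequence
and its limit form a single map `(ℕ ∪ {∞}) × Δ → X`, so it suffices that the images `e i` of
`d` under the inclusions of the levels `i` of `(ℕ ∪ {∞}) × Δ` converge to `e ∞`. A cluster
point of `e i` lies in the image of `F` of a map from a finite space, hence is fixed by `F ρ`
for the retraction `ρ` collapsing all levels beyond some `j` onto `∞`; but `F ρ` maps `e i`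
to `e ∞` for `i > j`, so the cluster point is `e ∞`.
-/

open CategoryTheory TopologicalSpace

universe u

attribute [local instance] ConcreteCategory.instFunLike

open Filter Topology OnePoint

section SecondCountable

variable {X Y : Type*} [TopologicalSpace X] [TopologicalSpace Y]

theorem IsClosedMap.isOpen_setOf_preimage_singleton_subset {f : X → Y} (hf : IsClosedMap f)
    {W : Set X} (hW : IsOpen W) : IsOpen {y | f ⁻¹' {y} ⊆ W} := by
  convert (hf _ hW.isClosed_compl).isOpen_compl using 1
  ext y
  simp [Set.subset_def, not_imp_not]

/-- For `y ∈ U`, cover the compact fibre over `y` by finitely many basic open sets inside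
`f ⁻¹' U`; the points whose whole fibre lies in that finite union form a neighbourhood of `y`
inside `U`, open because `f` is a closed map. -/
theorem Continuous.secondCountableTopology_of_surjective [CompactSpace X]
    [SecondCountableTopology X] [T2Space Y] {f : X → Y} (hf : Continuous f)
    (hsurj : Function.Surjective f) : SecondCountableTopology Y := by
  set B := countableBasis X
  let V : Set (Set X) → Set Y := fun t => {y | f ⁻¹' {y} ⊆ ⋃₀ t}
  have hbasis : IsTopologicalBasis (V '' {t | t.Finite ∧ t ⊆ B}) := by
    refine isTopologicalBasis_of_isOpen_of_nhds ?_ ?_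
    · rintro _ ⟨t, ⟨-, htB⟩, rfl⟩
      exact hf.isClosedMap.isOpen_setOf_preimage_singleton_subset
        (isOpen_sUnion fun b hb => isOpen_of_mem_countableBasis (htB hb))
    · intro y U hyU hU
      have hfiber : f ⁻¹' {y} ⊆ ⋃₀ {b ∈ B | b ⊆ f ⁻¹' U} := by
        rw [← (isBasis_countableBasis X).open_eq_sUnion' (hU.preimage hf)]
        rintro x rfl
        exact hyU
      rw [Set.sUnion_eq_biUnion] at hfiber
      obtain ⟨t, htU, htfin, hcover⟩ :=
        (isClosed_singleton.preimage hf).isCompact.elim_finite_subcover_image (c := id)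
          (fun b hb => isOpen_of_mem_countableBasis hb.1) hfiber
      refine ⟨V t, ⟨t, ⟨htfin, fun b hb => (htU hb).1⟩, rfl⟩,
        by simpa [V, Set.sUnion_eq_biUnion] using hcover, ?_⟩
      intro y' hy'
      obtain ⟨x, rfl⟩ := hsurj y'
      obtain ⟨b, hb, hxb⟩ := hy' rfl
      exact (htU hb).2 hxb
  exact hbasis.secondCountableTopology
    ((Set.countable_ofPred_finite_subset (countable_countableBasis X)).image V)

theorem Continuous.metrizableSpace_of_surjective [CompactSpace X] [MetrizableSpace X]
    [T2Space Y] {f : X → Y} (hf : Continuous f) (hsurj : Function.Surjective f) :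
    MetrizableSpace Y := by
  have := hf.secondCountableTopology_of_surjective hsurj
  have := hsurj.compactSpace hf
  exact metrizableSpace_of_t3_secondCountable Y

end SecondCountable

namespace OnePoint

def truncate (j : ℕ) (m : OnePoint ℕ) : OnePoint ℕ :=
  m.elim ∞ fun i => if i ≤ j then (i : OnePoint ℕ) else ∞

theorem truncate_coe_of_le {i j : ℕ} (h : i ≤ j) : truncate j i = i := if_pos h

theorem truncate_coe_of_lt {i j : ℕ} (h : j < i) : truncate j i = ∞ := if_neg (by omega)

theorem continuous_truncate (j : ℕ) : Continuous (truncate j) := by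
  rw [continuous_iff_from_nat]
  refine tendsto_const_nhds.congr' ?_
  filter_upwards [eventually_gt_atTop j] with i hi
  exact (truncate_coe_of_lt hi).symm

theorem exists_truncate_eq_of_finite {s : Set (OnePoint ℕ)} (hs : s.Finite) :
    ∃ j, ∀ m ∈ s, truncate j m = m := by
  obtain ⟨j, hj⟩ := (hs.preimage OnePoint.coe_injective.injOn).bddAbove
  refine ⟨j, fun m hm => ?_⟩
  induction m using OnePoint.rec with
  | infty => rfl
  | coe i => exact truncate_coe_of_le (hj hm)

end OnePoint

namespace CategoryTheory.Functor

variable (F : CompHaus.{u} ⥤ CompHaus.{u})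

def HasDegreeAtMost (n : ℕ) : Prop :=
  ∀ (X : CompHaus.{u}) (a : F.obj X), ∃ (A : CompHaus.{u}) (f : A ⟶ X),
    Finite A ∧ DiscreteTopology A ∧ Nat.card A ≤ n ∧ a ∈ Set.range (F.map f)

def HasFiniteSupports : Prop :=
  ∀ (W : CompHaus.{u}) (c : F.obj W), ∃ (A : CompHaus.{u}) (f : A ⟶ W),
    Finite A ∧ c ∈ Set.range (F.map f)

variable {F}

theorem HasDegreeAtMost.hasFiniteSupports {n : ℕ} (hF : F.HasDegreeAtMost n) :
    F.HasFiniteSupports := fun W c =>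
  let ⟨A, f, hA, _, _, hc⟩ := hF W c
  ⟨A, f, hA, hc⟩

end CategoryTheory.Functor

namespace CompHaus

-- Instance search times out deriving this from `T2Space`.
instance (Y : CompHaus.{u}) : T1Space Y := T2Space.t1Space

def homOfDiscrete {D X : CompHaus.{u}} [DiscreteTopology D] (g : D → X) : D ⟶ X :=
  ConcreteCategory.ofHom ⟨g, continuous_of_discreteTopology⟩

def natInftyProd (D : CompHaus.{u}) : CompHaus.{u} :=
  CompHaus.of (ULift.{u} (OnePoint ℕ) × D)

def natInftyProdIncl (D : CompHaus.{u}) (m : OnePoint ℕ) : D ⟶ natInftyProd D :=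
  ConcreteCategory.ofHom ⟨fun k => (ULift.up m, k), by fun_prop⟩

def natInftyProdTruncate (D : CompHaus.{u}) (j : ℕ) : natInftyProd D ⟶ natInftyProd D :=
  ConcreteCategory.ofHom ⟨fun p => (ULift.up (truncate j p.1.down), p.2),
    (continuous_uliftUp.comp ((continuous_truncate j).comp
      (continuous_uliftDown.comp continuous_fst))).prodMk continuous_snd⟩

end CompHaus

open CompHaus

section Parametrization

variable {F : CompHaus.{u} ⥤ CompHaus.{u}}

theorem CategoryTheory.Functor.HasFiniteSupports.tendsto_map_natInftyProdIncl
    (hF : F.HasFiniteSupports)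
    (D : CompHaus.{u}) (b : F.obj D) :
    Tendsto (fun i : ℕ => F.map (natInftyProdIncl D i) b) atTop
      (𝓝 (F.map (natInftyProdIncl D ∞) b)) := by
  refine tendsto_nhds_of_unique_mapClusterPt fun c hc => ?_
  obtain ⟨A, f, hA, d, rfl⟩ := hF _ c
  obtain ⟨j, hj⟩ := exists_truncate_eq_of_finite (Set.finite_range fun a => (f a).1.down)
  have hfix : f ≫ natInftyProdTruncate D j = f := by
    ext a
    exact Prod.ext (congrArg ULift.up (hj _ ⟨a, rfl⟩)) rfl
  have htail : ∀ i : ℕ, j < i →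
      natInftyProdIncl D i ≫ natInftyProdTruncate D j = natInftyProdIncl D ∞ := by
    intro i hi
    ext k
    exact Prod.ext (congrArg ULift.up (truncate_coe_of_lt hi)) rfl
  have hρc : MapClusterPt (F.map (natInftyProdTruncate D j) (F.map f d)) atTop
      (fun i : ℕ => F.map (natInftyProdTruncate D j) (F.map (natInftyProdIncl D i) b)) :=
    hc.continuousAt_comp (ConcreteCategory.hom (F.map _)).continuous.continuousAt
  have hρtail : ∀ᶠ i : ℕ in atTop,
      F.map (natInftyProdTruncate D j) (F.map (natInftyProdIncl D i) b) =
        F.map (natInftyProdIncl D ∞) b := by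
    filter_upwards [eventually_gt_atTop j] with i hi
    rw [← ConcreteCategory.comp_apply, ← F.map_comp, htail i hi]
  rw [← ConcreteCategory.comp_apply, ← F.map_comp, hfix] at hρc
  exact eq_of_nhds_neBot <| ClusterPt.mono hρc <|
    tendsto_const_nhds.congr' (hρtail.mono fun _ h => h.symm)

theorem CategoryTheory.Functor.HasFiniteSupports.continuous_map_homOfDiscrete_apply
    (hF : F.HasFiniteSupports)
    {D X : CompHaus.{u}} [DiscreteTopology D] [Finite D] [MetrizableSpace X] (b : F.obj D) :
    Continuous fun g : D → X => F.map (homOfDiscrete g) b := by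
  refine SeqContinuous.continuous fun u g hu => ?_
  let seq : OnePoint ℕ → D → X := fun m => m.elim g u
  have hseq : Continuous seq := (continuous_iff_from_nat seq).mpr hu
  let G : natInftyProd D ⟶ X := ConcreteCategory.ofHom ⟨fun p => seq p.1.down p.2,
    continuous_prod_of_discrete_right.mpr fun k =>
      (continuous_apply k).comp (hseq.comp continuous_uliftDown)⟩
  have hG : ∀ m, natInftyProdIncl D m ≫ G = homOfDiscrete (seq m) := fun _ => rfl
  have := ((ConcreteCategory.hom (F.map G)).continuous.tendsto _).comp
    (hF.tendsto_map_natInftyProdIncl D b)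
  simp only [Function.comp_def, ← ConcreteCategory.comp_apply, ← F.map_comp, hG] at this
  exact this

theorem exists_comp_homOfDiscrete_eq {n : ℕ} {A X : CompHaus.{u}} [DiscreteTopology A] [Finite A]
    [Nonempty X] (hA : Nat.card A ≤ n) (f : A ⟶ X) :
    ∃ (i : A ⟶ CompHaus.of (ULift.{u} (Fin n))) (g : ULift.{u} (Fin n) → X),
      i ≫ homOfDiscrete g = f := by
  let e : A → ULift.{u} (Fin n) := fun a => ULift.up (Fin.castLE hA (Finite.equivFin A a))
  have he : Function.Injective e := by
    intro a a' h
    simpa [e] using h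
  refine ⟨homOfDiscrete e, Function.extend e f fun _ => Classical.arbitrary X, ?_⟩
  ext a
  exact he.extend_apply (ConcreteCategory.hom f) (fun _ => Classical.arbitrary X) a

theorem CategoryTheory.Functor.HasDegreeAtMost.exists_map_homOfDiscrete_apply_eq {n : ℕ}
    (hF : F.HasDegreeAtMost n) {X : CompHaus.{u}} [Nonempty X] (a : F.obj X) :
    ∃ (g : ULift.{u} (Fin n) → X) (d : F.obj (CompHaus.of (ULift.{u} (Fin n)))),
      F.map (homOfDiscrete g) d = a := by
  obtain ⟨A, f, _, _, hA, d, rfl⟩ := hF X a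
  obtain ⟨i, g, rfl⟩ := exists_comp_homOfDiscrete_eq hA f
  exact ⟨g, F.map i d, by rw [F.map_comp, ConcreteCategory.comp_apply]⟩

end Parametrization

/-- Basmanov-type theorem: a monomorphic functor `F` on the category of compact Hausdorff
spaces, of finite degree `n` with `F` of the `n`-point discrete space finite, preserves
metrizability. -/
theorem functor_finite_degree_preserves_metrizable
    (F : CompHaus.{u} ⥤ CompHaus.{u})
    (hmono : ∀ (X Y : CompHaus.{u}) (f : X ⟶ Y), Function.Injective f →
      Function.Injective (F.map f))
    (n : ℕ)
    (hdeg : ∀ (X : CompHaus.{u}) (a : F.obj X), ∃ (A : CompHaus.{u}) (f : A ⟶ X),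
      Finite A ∧ DiscreteTopology A ∧ Nat.card A ≤ n ∧ a ∈ Set.range (F.map f))
    (hfin : Finite (F.obj (CompHaus.of (ULift.{u} (Fin n)))))
    (X : CompHaus.{u}) (hX : MetrizableSpace X) :
    MetrizableSpace (F.obj X) := by
  rcases isEmpty_or_nonempty X with hX₀ | hX₀
  · have : Finite (F.obj X) := Finite.of_injective _ <|
      hmono X (CompHaus.of (ULift.{u} (Fin n))) (homOfDiscrete isEmptyElim)
        (Function.injective_of_subsingleton _)
    infer_instance
  · have hF : F.HasDegreeAtMost n := hdeg
    let Φ : (ULift.{u} (Fin n) → X) × F.obj (CompHaus.of (ULift.{u} (Fin n))) → F.obj X :=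
      fun p => F.map (homOfDiscrete p.1) p.2
    have hΦ : Continuous Φ := continuous_prod_of_discrete_right.mpr
      hF.hasFiniteSupports.continuous_map_homOfDiscrete_apply
    refine hΦ.metrizableSpace_of_surjective fun a => ?_
    obtain ⟨g, d, rfl⟩ := hF.exists_map_homOfDiscrete_apply_eq a
    exact ⟨(g, d), rfl⟩
end

section
/- Let K be a non-trivial complete quasivariety of topological E-algebras of countable discrete signature E, and let L ⊆ E be a compact (equivalently, finite) subset. Then for every n ∈ ω there exists d ∈ ℕ such that for every compact Hausdorff space X and every element a ∈ ⟨η(X)⟩^L_n ⊆ F_K(X) there is a subset A ⊆ X with |A| ≤ d and a ∈ ⟨η(A)⟩^L_n. (That is, the functor ⟨·⟩^L_n has finite degree.) -/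
open Set Topology TopologicalSpace

universe u v

/-- A topological algebra over the continuous signature `E = ⊕ₙ Eₙ`:
a topological space with continuous operations `Eₙ × Xⁿ → X`. -/
structure TopAlg (E : ℕ → Type u) [∀ n, TopologicalSpace (E n)] : Type (u + 1) where
  carrier : Type u
  [top : TopologicalSpace carrier]
  op : ∀ n, E n → (Fin n → carrier) → carrier
  cont : ∀ n, Continuous fun p : E n × (Fin n → carrier) => op n p.1 p.2

attribute [instance] TopAlg.top

variable {E : ℕ → Type u} [∀ n, TopologicalSpace (E n)]

/-- `h` is an `E`-homomorphism of topological `E`-algebras. -/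
def IsHomE (X Y : TopAlg E) (h : X.carrier → Y.carrier) : Prop :=
  ∀ (n : ℕ) (z : E n) (v : Fin n → X.carrier), h (X.op n z v) = Y.op n z fun i => h (v i)

/-- A subset is a subalgebra if it is closed under all the operations. -/
def IsSubalg (X : TopAlg E) (A : Set X.carrier) : Prop :=
  ∀ (n : ℕ) (z : E n) (v : Fin n → X.carrier), (∀ i, v i ∈ A) → X.op n z v ∈ A

/-- The subalgebra `A` of `X`, as a topological `E`-algebra with the subspace topology. -/
def subAlg (X : TopAlg E) (A : Set X.carrier) (hA : IsSubalg X A) : TopAlg E where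
  carrier := A
  op n z v := ⟨X.op n z fun i => (v i).1, hA n z _ fun i => (v i).2⟩
  cont n := by
    apply Continuous.subtype_mk
    exact (X.cont n).comp (continuous_fst.prodMk (continuous_pi fun i =>
      continuous_subtype_val.comp ((continuous_apply i).comp continuous_snd)))

/-- The Tychonov product of a family of topological `E`-algebras. -/
def prodAlg {ι : Type u} (X : ι → TopAlg E) : TopAlg E where
  carrier := ∀ i, (X i).carrier
  op n z v i := (X i).op n z fun j => v j i
  cont n := continuous_pi fun i => ((X i).cont n).comp
    (continuous_fst.prodMk (continuous_pi fun j =>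
      (continuous_apply i).comp ((continuous_apply j).comp continuous_snd)))

/-- A Tychonov space: completely regular and Hausdorff. -/
def Tychonov (X : Type v) [TopologicalSpace X] : Prop :=
  CompletelyRegularSpace X ∧ T2Space X

/-- A complete quasivariety: closed under subalgebras, Tychonov products,
and under algebraic isomorphisms having Tychonov domain. -/
def IsCompleteQuasivariety (K : Set (TopAlg E)) : Prop :=
  (∀ X ∈ K, ∀ (A : Set X.carrier) (hA : IsSubalg X A), subAlg X A hA ∈ K) ∧
  (∀ (ι : Type u) (X : ι → TopAlg E), (∀ i, X i ∈ K) → prodAlg X ∈ K) ∧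
  (∀ X : TopAlg E, Tychonov X.carrier →
    (∃ Y ∈ K, ∃ h : X.carrier → Y.carrier, Function.Bijective h ∧ IsHomE X Y h ∧
      ∃ g : Y.carrier → X.carrier, Function.LeftInverse g h ∧ Function.RightInverse g h ∧
        IsHomE Y X g) → X ∈ K)

/-- `K` is a non-trivial class: some member has more than one point. -/
def NontrivialClass (K : Set (TopAlg E)) : Prop :=
  ∃ X ∈ K, ∃ a b : X.carrier, a ≠ b

/-- `(F, η)` is a free topological `E`-algebra over `X` in the class `K`. -/
def IsFreeAlg (K : Set (TopAlg E)) (X : Type u) [TopologicalSpace X]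
    (F : TopAlg E) (η : X → F.carrier) : Prop :=
  F ∈ K ∧ Continuous η ∧ ∀ Y ∈ K, ∀ f : X → Y.carrier, Continuous f →
    ∃! h : F.carrier → Y.carrier, (Continuous h ∧ IsHomE F Y h) ∧ f = h ∘ η

/-- The sets `⟨Z⟩ᴸₙ`: iterated application of the operations with parameters in `L`
to the elements of `Z`. -/
def hullSeq (X : TopAlg E) (L : Set (Σ n, E n)) (Z : Set X.carrier) : ℕ → Set X.carrier
  | 0 => Z
  | n + 1 => hullSeq X L Z n ∪
      ⋃ k, (fun p : E k × (Fin k → X.carrier) => X.op k p.1 p.2) ''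
        {p | (⟨k, p.1⟩ : Σ n, E n) ∈ L ∧ ∀ i, p.2 i ∈ hullSeq X L Z n}

/-- A `k_ω`-sequence for `X`. -/
def IsKOmegaSeq (X : Type v) [TopologicalSpace X] (C : ℕ → Set X) : Prop :=
  (∀ n, IsCompact (C n)) ∧ Monotone C ∧ (⋃ n, C n) = Set.univ ∧
    ∀ U : Set X, IsOpen U ↔ ∀ n, IsOpen ((Subtype.val ⁻¹' U : Set (C n)))

/-- A `k_ω`-space: a Hausdorff space which is the direct limit of a `k_ω`-sequence. -/
def IsKOmega (X : Type v) [TopologicalSpace X] : Prop :=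
  T2Space X ∧ ∃ C : ℕ → Set X, IsKOmegaSeq X C

/-- A space is submetrizable if its topology is finer than some metrizable topology. -/
def Submetrizable (X : Type v) [t : TopologicalSpace X] : Prop :=
  ∃ m : TopologicalSpace X, t ≤ m ∧ @MetrizableSpace X m

/-- `X` is an absolute neighborhood extensor for the class of spaces satisfying `P`. -/
def IsANEFor (X : Type u) [TopologicalSpace X]
    (P : (A : Type v) → TopologicalSpace A → Prop) : Prop :=
  ∀ (A : Type v) [tA : TopologicalSpace A], P A tA → ∀ B : Set A, IsClosed B →
    ∀ f : B → X, Continuous f → ∃ N : Set A, IsOpen N ∧ B ⊆ N ∧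
      ∃ g : N → X, Continuous g ∧ ∀ (a : A) (hB : a ∈ B) (hN : a ∈ N), g ⟨a, hN⟩ = f ⟨a, hB⟩

/-- `X` is an `ANR(k_ω)`-space: whenever `X` is embedded as a closed subspace of a
`k_ω`-space, it is a retract of a neighborhood. -/
def IsANRkw (X : Type u) [TopologicalSpace X] : Prop :=
  IsKOmega X ∧ ∀ (Y : Type v) [TopologicalSpace Y], IsKOmega Y →
    ∀ e : X → Y, IsClosedEmbedding e →
      ∃ N : Set Y, (∀ y ∈ Set.range e, N ∈ nhds y) ∧
        ∃ r : N → Y, Continuous r ∧ (∀ z : N, r z ∈ Set.range e) ∧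
          ∀ z : N, (z : Y) ∈ Set.range e → r z = (z : Y)

/-!
Only finitely many arities occur in the compact set `L`, say all at most `m`. An element of
`⟨Z⟩ᴸₙ₊₁` is either in `⟨Z⟩ᴸₙ` or an operation of arity `k ≤ m` applied to `k` elements of
`⟨Z⟩ᴸₙ`, so by induction it already lies in `⟨W⟩ᴸₙ` for some `W ⊆ Z` with `|W| ≤ (m + 1)ⁿ`.
-/

namespace hullSeq

variable (X : TopAlg E) (L : Set (Σ n, E n))

theorem mem_succ {Z : Set X.carrier} {n : ℕ} {a : X.carrier} :
    a ∈ hullSeq X L Z (n + 1) ↔ a ∈ hullSeq X L Z n ∨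
      ∃ (k : ℕ) (z : E k) (v : Fin k → X.carrier),
        ⟨k, z⟩ ∈ L ∧ (∀ i, v i ∈ hullSeq X L Z n) ∧ X.op k z v = a := by
  simp only [hullSeq, mem_union, mem_iUnion, mem_image, mem_ofPred_eq, Prod.exists, and_assoc]

theorem mono {Z Z' : Set X.carrier} (h : Z ⊆ Z') (n : ℕ) :
    hullSeq X L Z n ⊆ hullSeq X L Z' n := by
  induction n with
  | zero => exact h
  | succ n ih =>
    intro a ha
    rcases (mem_succ X L).1 ha with ha | ⟨k, z, v, hz, hv, rfl⟩
    · exact (mem_succ X L).2 (Or.inl (ih ha))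
    · exact (mem_succ X L).2 (Or.inr ⟨k, z, v, hz, fun i => ih (hv i), rfl⟩)

theorem exists_finset_card_le_of_mem_range {α : Type*} (g : α → X.carrier) {m : ℕ}
    (hLm : ∀ p ∈ L, p.1 ≤ m) (n : ℕ) {a : X.carrier} (ha : a ∈ hullSeq X L (range g) n) :
    ∃ A : Finset α, A.card ≤ (m + 1) ^ n ∧ a ∈ hullSeq X L (g '' A) n := by
  classical
  induction n generalizing a with
  | zero =>
    obtain ⟨x, rfl⟩ := ha
    exact ⟨{x}, by simp, by simp [hullSeq]⟩
  | succ n ih =>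
    rcases (mem_succ X L).1 ha with ha | ⟨k, z, v, hz, hv, rfl⟩
    · obtain ⟨A, hA, haA⟩ := ih ha
      refine ⟨A, hA.trans (Nat.pow_le_pow_right m.succ_pos n.le_succ), ?_⟩
      exact (mem_succ X L).2 (Or.inl haA)
    · choose A hA hvA using fun i => ih (hv i)
      refine ⟨Finset.univ.biUnion A, ?_, (mem_succ X L).2 (Or.inr ⟨k, z, v, hz, fun i => ?_, rfl⟩)⟩
      · calc (Finset.univ.biUnion A).card ≤ ∑ i, (A i).card := Finset.card_biUnion_le
          _ ≤ ∑ _i : Fin k, (m + 1) ^ n := Finset.sum_le_sum fun i _ => hA i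
          _ = k * (m + 1) ^ n := by simp
          _ ≤ (m + 1) ^ (n + 1) := by
            rw [pow_succ']
            exact Nat.mul_le_mul_right _ ((hLm _ hz).trans m.le_succ)
      · refine mono X L (image_mono ?_) n (hvA i)
        exact Finset.coe_subset.2 (Finset.subset_biUnion_of_mem A (Finset.mem_univ i))

end hullSeq

theorem hull_functor_finite_degree_general
    (E : ℕ → Type u) [∀ n, TopologicalSpace (E n)]
    (K : Set (TopAlg E))
    (L : Set (Σ n, E n)) (hL : IsCompact L) (n : ℕ) :
    ∃ d : ℕ, ∀ (X : Type u) [TopologicalSpace X] [CompactSpace X] [T2Space X],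
      ∀ (F : TopAlg E) (η : X → F.carrier), IsFreeAlg K X F η →
        ∀ a ∈ hullSeq F L (Set.range η) n,
          ∃ A : Set X, A.Finite ∧ A.ncard ≤ d ∧ a ∈ hullSeq F L (η '' A) n := by
  obtain ⟨m, hm⟩ :=
    (hL.image (f := Sigma.fst) (continuous_sigma fun _ => continuous_const)).bddAbove
  refine ⟨(m + 1) ^ n, fun X _ _ _ F η _ a ha => ?_⟩
  obtain ⟨A, hA, haA⟩ :=
    hullSeq.exists_finset_card_le_of_mem_range F L η (fun p hp => hm (mem_image_of_mem _ hp)) n ha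
  exact ⟨A, A.finite_toSet, by rwa [ncard_coe_finset], haA⟩

/-- The functor `⟨·⟩ᴸₙ` has finite degree: there is `d` such that every element of
`⟨η(X)⟩ᴸₙ` lies in `⟨η(A)⟩ᴸₙ` for some subset `A ⊆ X` with at most `d` elements. -/
theorem hull_functor_finite_degree
    (E : ℕ → Type u) [∀ n, TopologicalSpace (E n)]
    (hEd : DiscreteTopology (Σ n, E n)) (hEc : Countable (Σ n, E n))
    (K : Set (TopAlg E)) (hK : IsCompleteQuasivariety K) (hnt : NontrivialClass K)
    (L : Set (Σ n, E n)) (hL : IsCompact L) (n : ℕ) :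
    ∃ d : ℕ, ∀ (X : Type u) [TopologicalSpace X] [CompactSpace X] [T2Space X],
      ∀ (F : TopAlg E) (η : X → F.carrier), IsFreeAlg K X F η →
        ∀ a ∈ hullSeq F L (Set.range η) n,
          ∃ A : Set X, A.Finite ∧ A.ncard ≤ d ∧ a ∈ hullSeq F L (η '' A) n :=
  hull_functor_finite_degree_general E K L hL n
end

section
/- For a submetrizable k_ω-space X the following conditions are equivalent: (1) X is an ANR(k_ω) (whenever X is homeomorphic to a closed subspace of a k_ω-space Y, its image is a retract of some neighborhood in Y); (2) X is an absolute neighborhood extensor for the class of k_ω-spaces; (3) X is an absolute neighborhood extensor for the class of compact metrizable spaces. -/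
open Set Topology TopologicalSpace

universe u v

/-!
(2) ⇒ (1) by extending the inverse of the embedding, and (2) ⇒ (3) since compact metrizable
spaces are `k_ω`. The remaining implications pass through being an ANE for compact Hausdorff
spaces.

(3) ⇒ ANE(compact). For `f : B → X` on a closed subset of a compact Hausdorff `A`, the image
`f(B)` is compact, hence metrizable since `X` is submetrizable, so it is a closed subset of the
Hilbert cube `Q`. Extending `B → Q` over `A` by Tietze reduces the problem to an extension over a
neighbourhood of `f(B)` in `Q`, which (3) provides.

(1) ⇒ ANE(compact). The adjunction space `A ∪_f X` is `k_ω` and contains `X` as a closed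
subspace; it is Hausdorff because real functions separating points of `X` (which exist as `X` is
submetrizable) extend over `A` by Tietze. A neighbourhood retraction onto `X`, composed with
`A → A ∪_f X`, extends `f`.

ANE(compact) ⇒ (2). For a `k_ω`-space `A = ⋃ Cₙ`, extend step by step over relatively open
neighbourhoods `Uₙ` of `B ∩ Cₙ` in `Cₙ`, each step keeping the previous extension on
`closure Uₙ ⊆ Uₙ₊₁`. The union of the `Uₙ` is open, and the glued extension continuous on it,
because `A` carries the direct limit topology of the `Cₙ`.
-/

theorem isANEFor_iff_continuousOn {X : Type u} [TopologicalSpace X]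
    {P : (A : Type v) → TopologicalSpace A → Prop} :
    IsANEFor X P ↔ ∀ (A : Type v) [tA : TopologicalSpace A], P A tA → ∀ B : Set A, IsClosed B →
      ∀ φ : A → X, ContinuousOn φ B →
        ∃ N : Set A, IsOpen N ∧ B ⊆ N ∧ ∃ ψ : A → X, ContinuousOn ψ N ∧ EqOn ψ φ B := by
  constructor
  · intro hX A _ hA B hB φ hφ
    obtain ⟨N, hN, hBN, g, hg, hgf⟩ := hX A hA B hB (B.domRestrict φ) hφ.domRestrict
    have hextend : N.domRestrict (Function.extend Subtype.val g φ) = g :=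
      funext (Subtype.val_injective.extend_apply g φ)
    refine ⟨N, hN, hBN, Function.extend Subtype.val g φ, ?_, fun a ha => ?_⟩
    · rw [continuousOn_iff_continuous_domRestrict, hextend]
      exact hg
    · exact (congrFun hextend ⟨a, hBN ha⟩).trans (hgf a ha (hBN ha))
  · intro hX A _ hA B hB f hf
    rcases isEmpty_or_nonempty X with _ | ⟨⟨x₀⟩⟩
    · refine ⟨∅, isOpen_empty, fun b hb => isEmptyElim (f ⟨b, hb⟩), fun z => (z.2 : False).elim,
        continuous_of_discreteTopology, fun a _ ha => (ha : False).elim⟩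
    obtain ⟨φ, hφ⟩ : ∃ φ : A → X, B.domRestrict φ = f :=
      ⟨Function.extend Subtype.val f fun _ => x₀, funext (Subtype.val_injective.extend_apply f _)⟩
    obtain ⟨N, hN, hBN, ψ, hψ, hψφ⟩ :=
      hX A hA B hB φ (continuousOn_iff_continuous_domRestrict.2 (hφ ▸ hf))
    exact ⟨N, hN, hBN, N.domRestrict ψ, hψ.domRestrict,
      fun a ha _ => (hψφ ha).trans (congrFun hφ ⟨a, ha⟩)⟩

theorem IsANEFor.mono {X : Type u} [TopologicalSpace X]
    {P Q : (A : Type v) → TopologicalSpace A → Prop} (hX : IsANEFor X Q)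
    (hPQ : ∀ A tA, P A tA → Q A tA) : IsANEFor X P :=
  fun A _ hA => hX A (hPQ A _ hA)

theorem isKOmega_of_compactSpace (A : Type v) [TopologicalSpace A] [CompactSpace A] [T2Space A] :
    IsKOmega A :=
  ⟨inferInstance, fun _ => univ, fun _ => isCompact_univ, monotone_const, iUnion_const _,
    fun _ => ⟨fun hU _ => hU.preimage continuous_subtype_val,
      fun h => (Homeomorph.Set.univ A).isOpen_preimage.1 (h 0)⟩⟩

theorem exists_eqOn_of_eqOn_succ {α β : Type*} {S : ℕ → Set α} (hS : Monotone S)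
    (g : ℕ → α → β) (hg : ∀ n, EqOn (g (n + 1)) (g n) (S n)) :
    ∃ G : α → β, ∀ n, EqOn G (g n) (S n) := by
  classical
  have hle : ∀ m n, m ≤ n → EqOn (g n) (g m) (S m) := by
    intro m n hmn
    induction n, hmn using Nat.le_induction with
    | base => exact fun _ _ => rfl
    | succ n hmn ih => exact fun a ha => (hg n (hS hmn ha)).trans (ih ha)
  refine ⟨fun a => if h : ∃ n, a ∈ S n then g (Nat.find h) a else g 0 a, fun n a ha => ?_⟩
  have h : ∃ n, a ∈ S n := ⟨n, ha⟩
  simp only [dif_pos h]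
  exact (hle _ n (Nat.find_min' h ha) (Nat.find_spec h)).symm

namespace IsKOmegaSeq

variable {A : Type v} [TopologicalSpace A] {C : ℕ → Set A} {O : ℕ → Set A}

theorem isOpen_iUnion_inter (hC : IsKOmegaSeq A C) (hO : ∀ n, IsOpen (O n))
    (hmono : Monotone fun n => O n ∩ C n) : IsOpen (⋃ n, O n ∩ C n) := by
  refine (hC.2.2.2 _).2 fun k => ?_
  have htail : (Subtype.val ⁻¹' ⋃ n, O n ∩ C n : Set (C k)) = Subtype.val ⁻¹' ⋃ n ≥ k, O n := by
    ext z
    simp only [mem_preimage, mem_iUnion, mem_inter_iff, exists_prop]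
    constructor
    · rintro ⟨n, hzO, hzC⟩
      exact ⟨max n k, le_max_right n k, (hmono (le_max_left n k) ⟨hzO, hzC⟩).1⟩
    · rintro ⟨n, hkn, hzO⟩
      exact ⟨n, hzO, hC.2.1 hkn z.2⟩
  rw [htail]
  exact (isOpen_biUnion fun n _ => hO n).preimage continuous_subtype_val

theorem continuousOn_iUnion_inter {Z : Type*} [TopologicalSpace Z] {G : A → Z}
    (hC : IsKOmegaSeq A C) (hO : ∀ n, IsOpen (O n)) (hmono : Monotone fun n => O n ∩ C n)
    (hG : ∀ n, ContinuousOn G (O n ∩ C n)) : ContinuousOn G (⋃ n, O n ∩ C n) := by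
  rw [continuousOn_open_iff (hC.isOpen_iUnion_inter hO hmono)]
  intro V hV
  choose Q hQ hQG using fun n => continuousOn_iff'.1 (hG n) V hV
  have hpiece : ∀ n, (Q n ∩ O n) ∩ C n = (O n ∩ C n) ∩ G ⁻¹' V := fun n => by
    rw [inter_assoc, ← hQG n, inter_comm]
  rw [iUnion_inter]
  simp_rw [← hpiece]
  refine hC.isOpen_iUnion_inter (fun n => (hQ n).inter (hO n)) ?_
  simp_rw [hpiece]
  exact fun m n hmn => inter_subset_inter_left _ (hmono hmn)

end IsKOmegaSeq

section CompactToKOmega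

variable {X : Type u} [TopologicalSpace X] {A : Type v} [TopologicalSpace A]

theorem IsANEFor.exists_extension_near_isCompact
    (hX : IsANEFor.{u, v} X fun K tK => @CompactSpace K tK ∧ @T2Space K tK) [T2Space A]
    {K D : Set A} (hK : IsCompact K) (hDK : D ⊆ K) (hD : IsClosed D) {χ : A → X}
    (hχ : ContinuousOn χ D) :
    ∃ O : Set A, IsOpen O ∧ D ⊆ O ∧
      ∃ ψ : A → X, ContinuousOn ψ (closure (O ∩ K)) ∧ EqOn ψ χ D := by
  have := isCompact_iff_compactSpace.1 hK
  have hD' : IsClosed (Subtype.val ⁻¹' D : Set K) := hD.preimage continuous_subtype_val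
  obtain ⟨N, hN, hDN, ψ, hψ, hψχ⟩ := isANEFor_iff_continuousOn.1 hX K ⟨inferInstance, inferInstance⟩
    _ hD' (χ ∘ Subtype.val) (hχ.comp continuous_subtype_val.continuousOn (mapsTo_preimage _ _))
  obtain ⟨V, hV, hDV, hVN⟩ := normal_exists_closure_subset hD' hN hDN
  obtain ⟨O, hO, rfl⟩ := isOpen_induced_iff.1 hV
  have hclosure : closure (O ∩ K) = Subtype.val '' closure (Subtype.val ⁻¹' O : Set K) := by
    rw [← hK.isClosed.isClosedEmbedding_subtypeVal.closure_image_eq, Subtype.image_preimage_coe,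
      inter_comm]
  have hextend : Function.extend Subtype.val ψ χ ∘ Subtype.val = ψ :=
    funext (Subtype.val_injective.extend_apply ψ χ)
  refine ⟨O, hO, fun a ha => hDV (a := ⟨a, hDK ha⟩) ha, Function.extend Subtype.val ψ χ, ?_,
    fun a ha => ?_⟩
  · rw [hclosure, IsInducing.subtypeVal.continuousOn_image_iff, hextend]
    exact hψ.mono hVN
  · exact (congrFun hextend ⟨a, hDK ha⟩).trans (hψχ (x := ⟨a, hDK ha⟩) ha)

structure PartialExtension (B : Set A) (φ : A → X) (K : Set A) where
  O : Set A
  isOpen : IsOpen O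
  g : A → X
  continuousOn : ContinuousOn g (closure (O ∩ K))
  eqOn : EqOn g φ (B ∩ closure (O ∩ K))

theorem PartialExtension.exists_extend
    (hX : IsANEFor.{u, v} X fun K tK => @CompactSpace K tK ∧ @T2Space K tK) [T2Space A]
    {B : Set A} (hB : IsClosed B) {φ : A → X} (hφ : ContinuousOn φ B) {K K' : Set A}
    (hKK' : K ⊆ K') (hK' : IsCompact K') (s : PartialExtension B φ K) :
    ∃ s' : PartialExtension B φ K', closure (s.O ∩ K) ∪ B ∩ K' ⊆ s'.O ∩ K' ∧
      EqOn s'.g s.g (closure (s.O ∩ K)) := by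
  classical
  set M := closure (s.O ∩ K)
  have hMK' : M ⊆ K' := closure_minimal (inter_subset_right.trans hKK') hK'.isClosed
  have hDK' : M ∪ B ∩ K' ⊆ K' := union_subset hMK' inter_subset_right
  set χ := (B ∩ K').piecewise φ s.g
  have hχM : EqOn χ s.g M := fun a ha => by
    by_cases haB : a ∈ B ∩ K'
    · exact (piecewise_eq_of_mem _ _ _ haB).trans (s.eqOn ⟨haB.1, ha⟩).symm
    · exact piecewise_eq_of_notMem _ _ _ haB
  have hχ : ContinuousOn χ (M ∪ B ∩ K') :=
    (s.continuousOn.congr hχM).union_of_isClosed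
      ((hφ.mono inter_subset_left).congr fun a ha => piecewise_eq_of_mem _ _ _ ha)
      isClosed_closure (hB.inter hK'.isClosed)
  obtain ⟨O', hO', hDO', ψ, hψ, hψχ⟩ := hX.exists_extension_near_isCompact hK' hDK'
    (isClosed_closure.union (hB.inter hK'.isClosed)) hχ
  refine ⟨⟨O', hO', ψ, hψ, fun a ha => ?_⟩, fun a ha => ⟨hDO' ha, hDK' ha⟩,
    fun a ha => (hψχ (Or.inl ha)).trans (hχM ha)⟩
  have haK' : a ∈ K' := closure_minimal inter_subset_right hK'.isClosed ha.2
  exact (hψχ (Or.inr ⟨ha.1, haK'⟩)).trans (piecewise_eq_of_mem _ _ _ ⟨ha.1, haK'⟩)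

theorem IsANEFor.isKOmega_of_compact
    (hX : IsANEFor.{u, v} X fun K tK => @CompactSpace K tK ∧ @T2Space K tK) :
    IsANEFor.{u, v} X fun A tA => @IsKOmega A tA := by
  refine isANEFor_iff_continuousOn.2 fun A _ ⟨_, C, hC⟩ B hB φ hφ => ?_
  choose next hnext using fun n (s : PartialExtension B φ (C n)) =>
    s.exists_extend hX hB hφ (hC.2.1 n.le_succ) (hC.1 (n + 1))
  let s : ∀ n, PartialExtension B φ (C n) := fun n =>
    Nat.rec ⟨∅, isOpen_empty, φ, by simp, by simp⟩ next n
  set U : ℕ → Set A := fun n => (s n).O ∩ C n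
  have hUU : ∀ n, closure (U n) ⊆ U (n + 1) := fun n => subset_union_left.trans (hnext n (s n)).1
  have hU : Monotone U := monotone_nat_of_le_succ fun n => subset_closure.trans (hUU n)
  obtain ⟨G, hG⟩ := exists_eqOn_of_eqOn_succ (fun _ _ h => closure_mono (hU h))
    (fun n => (s n).g) fun n => (hnext n (s n)).2
  have hBU : ∀ a ∈ B, ∃ n, a ∈ U n := fun a ha => by
    obtain ⟨n, hn⟩ := mem_iUnion.1 (hC.2.2.1.symm ▸ mem_univ a : a ∈ ⋃ n, C n)
    exact ⟨n + 1, (hnext n (s n)).1 (Or.inr ⟨ha, hC.2.1 n.le_succ hn⟩)⟩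
  refine ⟨⋃ n, U n, hC.isOpen_iUnion_inter (fun n => (s n).isOpen) hU,
    fun a ha => mem_iUnion.2 (hBU a ha), G,
    hC.continuousOn_iUnion_inter (fun n => (s n).isOpen) hU
      fun n => ((s n).continuousOn.congr (hG n)).mono subset_closure, fun a ha => ?_⟩
  obtain ⟨n, hn⟩ := hBU a ha
  exact (hG n (subset_closure hn)).trans ((s n).eqOn ⟨ha, subset_closure hn⟩)

end CompactToKOmega

namespace Submetrizable

variable {X : Type u} [TopologicalSpace X]

theorem exists_continuous_injective_metric (hX : Submetrizable X) :
    ∃ (Y : Type u) (_ : MetricSpace Y) (i : X → Y), Continuous i ∧ Function.Injective i := by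
  obtain ⟨m, hle, hm⟩ := hX
  exact ⟨X, @metrizableSpaceMetric X m hm, id, continuous_id_of_le hle, Function.injective_id⟩

theorem metrizableSpace_of_isCompact (hX : Submetrizable X) {K : Set X} (hK : IsCompact K) :
    MetrizableSpace K := by
  obtain ⟨Y, _, i, hi, hinj⟩ := hX.exists_continuous_injective_metric
  have := isCompact_iff_compactSpace.1 hK
  exact ((hi.comp continuous_subtype_val).isClosedEmbedding
    (hinj.comp Subtype.val_injective)).isEmbedding.metrizableSpace

theorem exists_continuous_real_ne (hX : Submetrizable X) {x y : X} (hxy : x ≠ y) :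
    ∃ g : X → ℝ, Continuous g ∧ g x ≠ g y := by
  obtain ⟨Y, _, i, hi, hinj⟩ := hX.exists_continuous_injective_metric
  exact ⟨fun z => dist (i z) (i y), hi.dist continuous_const, by simpa using hinj.ne hxy⟩

end Submetrizable

theorem exists_isClosedEmbedding_hilbertCube (K : Type*) [TopologicalSpace K] [CompactSpace K]
    [MetrizableSpace K] : ∃ e : K → ℕ → unitInterval, IsClosedEmbedding e := by
  let : MetricSpace K := metrizableSpaceMetric K
  obtain ⟨e, he⟩ := Metric.PiNatEmbed.exists_embedding_to_hilbert_cube (X := K)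
  exact ⟨e, he.continuous.isClosedEmbedding he.injective⟩

theorem Topology.IsEmbedding.exists_continuousOn_leftInverse {K Q : Type*} [TopologicalSpace K]
    [TopologicalSpace Q] [Nonempty K] {e : K → Q} (he : IsEmbedding e) :
    ∃ ρ : Q → K, ρ ∘ e = id ∧ ContinuousOn ρ (range e) := by
  have hρ : Function.extend e id (fun _ => Classical.arbitrary K) ∘ e = id :=
    funext (he.injective.extend_apply _ _)
  refine ⟨_, hρ, ?_⟩
  rw [← image_univ, he.isInducing.continuousOn_image_iff, hρ]
  exact continuousOn_id

theorem IsANEFor.compact_of_compact_metrizable {X : Type u} [TopologicalSpace X]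
    (hXs : Submetrizable X)
    (hX : IsANEFor.{u, v} X fun A tA => @CompactSpace A tA ∧ @MetrizableSpace A tA) :
    IsANEFor.{u, v} X fun A tA => @CompactSpace A tA ∧ @T2Space A tA := by
  rw [isANEFor_iff_continuousOn] at hX ⊢
  intro A _ ⟨_, _⟩ B hB φ hφ
  rcases B.eq_empty_or_nonempty with rfl | ⟨b₀, hb₀⟩
  · exact ⟨∅, isOpen_empty, subset_rfl, φ, continuousOn_empty _, eqOn_empty _ _⟩
  set K := φ '' B
  have hK : IsCompact K := hB.isCompact.image_of_continuousOn hφ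
  have := isCompact_iff_compactSpace.1 hK
  have := hXs.metrizableSpace_of_isCompact hK
  obtain ⟨e, he⟩ := exists_isClosedEmbedding_hilbertCube K
  have hφK : Continuous fun b : B => (⟨φ b, mem_image_of_mem φ b.2⟩ : K) :=
    hφ.domRestrict.subtype_mk _
  obtain ⟨F, hF⟩ := ContinuousMap.exists_restrict_eq hB ⟨_, he.continuous.comp hφK⟩
  let Q := ULift.{v} (ℕ → unitInterval)
  have : MetrizableSpace Q := Homeomorph.ulift.isEmbedding.metrizableSpace
  have hue : IsClosedEmbedding (ULift.up ∘ e : K → Q) :=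
    Homeomorph.ulift.symm.isClosedEmbedding.comp he
  have : Nonempty K := ⟨⟨φ b₀, mem_image_of_mem φ hb₀⟩⟩
  obtain ⟨ρ, hρ, hρc⟩ := hue.isEmbedding.exists_continuousOn_leftInverse
  obtain ⟨N, hN, heN, ψ, hψ, hψρ⟩ := hX Q ⟨inferInstance, inferInstance⟩ _ hue.isClosed_range
    (Subtype.val ∘ ρ) (continuous_subtype_val.comp_continuousOn hρc)
  have hFB : ∀ b (hb : b ∈ B), ULift.up (F b) = (ULift.up ∘ e) ⟨φ b, mem_image_of_mem φ hb⟩ :=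
    fun b hb => congrArg ULift.up (ContinuousMap.congr_fun hF ⟨b, hb⟩)
  refine ⟨(ULift.up ∘ F) ⁻¹' N, hN.preimage (continuous_uliftUp.comp F.continuous),
    fun b hb => ?_, ψ ∘ ULift.up ∘ F,
    hψ.comp (continuous_uliftUp.comp F.continuous).continuousOn (mapsTo_preimage _ _),
    fun b hb => ?_⟩
  · change ULift.up (F b) ∈ N
    exact hFB b hb ▸ heN (mem_range_self _)
  · change ψ (ULift.up (F b)) = φ b
    rw [hFB b hb, hψρ (mem_range_self _)]
    exact congrArg Subtype.val (congrFun hρ _)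

namespace AdjunctionSpace

inductive Rel {A X : Type*} {B : Set A} (f : B → X) : A ⊕ X → A ⊕ X → Prop
  | glue (b : B) : Rel f (.inl b) (.inr (f b))

end AdjunctionSpace

abbrev AdjunctionSpace {A X : Type*} {B : Set A} (f : B → X) : Type _ :=
  Quot (AdjunctionSpace.Rel f)

namespace AdjunctionSpace

variable {A X : Type*} {B : Set A} (f : B → X)

def inl (a : A) : AdjunctionSpace f := Quot.mk _ (.inl a)

def inr (x : X) : AdjunctionSpace f := Quot.mk _ (.inr x)

theorem inl_eq_inr (b : B) : inl f b = inr f (f b) := Quot.sound (.glue b)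

def lift {Z : Type*} (h : A → Z) (g : X → Z) (hgh : ∀ b : B, h b = g (f b)) :
    AdjunctionSpace f → Z :=
  Quot.lift (Sum.elim h g) fun _ _ ⟨b⟩ => hgh b

theorem inr_or_inl (y : AdjunctionSpace f) : (∃ x, y = inr f x) ∨ ∃ a ∉ B, y = inl f a := by
  induction y using Quot.ind with
  | mk p =>
    rcases p with a | x
    · by_cases ha : a ∈ B
      · exact .inl ⟨f ⟨a, ha⟩, inl_eq_inr f ⟨a, ha⟩⟩
      · exact .inr ⟨a, ha, rfl⟩
    · exact .inl ⟨x, rfl⟩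

open Classical in
noncomputable def normalForm : AdjunctionSpace f → A ⊕ X :=
  lift f (fun a => if ha : a ∈ B then .inr (f ⟨a, ha⟩) else .inl a) .inr fun b => dif_pos b.2

theorem normalForm_inl {a : A} (ha : a ∉ B) : normalForm f (inl f a) = .inl a := dif_neg ha

theorem normalForm_inr (x : X) : normalForm f (inr f x) = .inr x := rfl

theorem inr_injective : Function.Injective (inr f) := fun x y hxy =>
  Sum.inr_injective <| by rw [← normalForm_inr f, hxy, normalForm_inr]

theorem inl_ne_inr {a : A} (ha : a ∉ B) (x : X) : inl f a ≠ inr f x := fun hax =>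
  Sum.inl_ne_inr <| by rw [← normalForm_inl f ha, hax, normalForm_inr]

theorem inl_eq_inr_iff {a : A} {x : X} : inl f a = inr f x ↔ ∃ ha : a ∈ B, f ⟨a, ha⟩ = x := by
  refine ⟨fun hax => ?_, fun ⟨ha, hax⟩ => hax ▸ inl_eq_inr f ⟨a, ha⟩⟩
  by_cases ha : a ∈ B
  · exact ⟨ha, inr_injective f ((inl_eq_inr f ⟨a, ha⟩).symm.trans hax)⟩
  · exact (inl_ne_inr f ha x hax).elim

variable [TopologicalSpace A] [TopologicalSpace X]

theorem continuous_inl : Continuous (inl f) := continuous_quot_mk.comp _root_.continuous_inl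

theorem continuous_inr : Continuous (inr f) := continuous_quot_mk.comp _root_.continuous_inr

theorem continuous_lift {Z : Type*} [TopologicalSpace Z] {h : A → Z} {g : X → Z}
    (hgh : ∀ b : B, h b = g (f b)) (hh : Continuous h) (hg : Continuous g) :
    Continuous (lift f h g hgh) :=
  continuous_quot_lift _ (hh.sumElim hg)

theorem isOpen_iff {U : Set (AdjunctionSpace f)} :
    IsOpen U ↔ IsOpen (inl f ⁻¹' U) ∧ IsOpen (inr f ⁻¹' U) :=
  isQuotientMap_quot_mk.isOpen_preimage.symm.trans isOpen_sum_iff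

theorem isClosed_iff {U : Set (AdjunctionSpace f)} :
    IsClosed U ↔ IsClosed (inl f ⁻¹' U) ∧ IsClosed (inr f ⁻¹' U) :=
  isQuotientMap_quot_mk.isClosed_preimage.symm.trans isClosed_sum_iff

theorem isClosedEmbedding_inr (hB : IsClosed B) (hf : Continuous f) :
    IsClosedEmbedding (inr f) := by
  refine .of_continuous_injective_isClosedMap (continuous_inr f) (inr_injective f) fun S hS => ?_
  have hinl : inl f ⁻¹' (inr f '' S) = Subtype.val '' (f ⁻¹' S) := by
    ext a
    constructor
    · rintro ⟨x, hx, hxa⟩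
      obtain ⟨ha, rfl⟩ := (inl_eq_inr_iff f).1 hxa.symm
      exact ⟨⟨a, ha⟩, hx, rfl⟩
    · rintro ⟨b, hb, rfl⟩
      exact ⟨f b, hb, (inl_eq_inr f b).symm⟩
  rw [isClosed_iff, hinl, (inr_injective f).preimage_image]
  exact ⟨hB.isClosedEmbedding_subtypeVal.isClosedMap _ (hS.preimage hf), hS⟩

theorem isKOmegaSeq [CompactSpace A] {D : ℕ → Set X} (hD : IsKOmegaSeq X D) :
    IsKOmegaSeq (AdjunctionSpace f) fun n => range (inl f) ∪ inr f '' D n := by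
  obtain ⟨hDc, hDm, hDu, hDo⟩ := hD
  refine ⟨fun n => (isCompact_range (continuous_inl f)).union ((hDc n).image (continuous_inr f)),
    fun m n hmn => union_subset_union_right _ (image_mono (hDm hmn)), ?_, fun U => ?_⟩
  · refine eq_univ_of_forall fun y => ?_
    rcases inr_or_inl f y with ⟨x, rfl⟩ | ⟨a, -, rfl⟩
    · obtain ⟨n, hn⟩ := mem_iUnion.1 (hDu.symm ▸ mem_univ x : x ∈ ⋃ n, D n)
      exact mem_iUnion.2 ⟨n, .inr (mem_image_of_mem _ hn)⟩
    · exact mem_iUnion.2 ⟨0, .inl (mem_range_self a)⟩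
  refine ⟨fun hU n => hU.preimage continuous_subtype_val,
    fun hU => (isOpen_iff f).2 ⟨?_, (hDo _).2 fun n => ?_⟩⟩
  · exact (hU 0).preimage ((continuous_inl f).subtype_mk fun a => .inl (mem_range_self a))
  · exact (hU n).preimage (((continuous_inr f).comp continuous_subtype_val).subtype_mk
      fun x => .inr (mem_image_of_mem _ x.2))

theorem exists_continuous_comp_inr_eq [NormalSpace A] (hB : IsClosed B) (hf : Continuous f)
    {g : X → ℝ} (hg : Continuous g) :
    ∃ φ : AdjunctionSpace f → ℝ, Continuous φ ∧ φ ∘ inr f = g := by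
  obtain ⟨h, hh⟩ := ContinuousMap.exists_restrict_eq hB ⟨g ∘ f, hg.comp hf⟩
  exact ⟨lift f h g fun b => ContinuousMap.congr_fun hh b, continuous_lift f _ h.continuous hg,
    rfl⟩

theorem exists_continuous_inl_eq_one [NormalSpace A] [T1Space A] {S : Set A} (hS : IsClosed S)
    (hBS : B ⊆ S) {a : A} (ha : a ∉ S) :
    ∃ φ : AdjunctionSpace f → ℝ, Continuous φ ∧ φ (inl f a) = 1 ∧ (∀ s ∈ S, φ (inl f s) = 0) ∧
      ∀ x, φ (inr f x) = 0 := by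
  obtain ⟨h, h0, h1, -⟩ :=
    exists_continuous_zero_one_of_isClosed hS isClosed_singleton (disjoint_singleton_right.2 ha)
  exact ⟨lift f h 0 fun b => h0 (hBS b.2), continuous_lift f _ h.continuous continuous_const,
    h1 rfl, fun s hs => h0 hs, fun _ => rfl⟩

theorem t2Space [NormalSpace A] [T1Space A] (hB : IsClosed B) (hf : Continuous f)
    (hX : ∀ x y : X, x ≠ y → ∃ g : X → ℝ, Continuous g ∧ g x ≠ g y) :
    T2Space (AdjunctionSpace f) := by
  suffices h : ∀ y₁ y₂ : AdjunctionSpace f, y₁ ≠ y₂ →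
      ∃ φ : AdjunctionSpace f → ℝ, Continuous φ ∧ φ y₁ ≠ φ y₂ from
    ⟨fun y₁ y₂ hne => let ⟨_, hφ, hne'⟩ := h y₁ y₂ hne; separated_by_continuous hφ hne'⟩
  have sep_inl_inr : ∀ a ∉ B, ∀ x,
      ∃ φ : AdjunctionSpace f → ℝ, Continuous φ ∧ φ (inl f a) ≠ φ (inr f x) := fun a ha x => by
    obtain ⟨φ, hφ, h1, -, h0⟩ := exists_continuous_inl_eq_one f hB subset_rfl ha
    exact ⟨φ, hφ, by rw [h1, h0]; exact one_ne_zero⟩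
  intro y₁ y₂ hne
  rcases inr_or_inl f y₁ with ⟨x₁, rfl⟩ | ⟨a₁, ha₁, rfl⟩ <;>
    rcases inr_or_inl f y₂ with ⟨x₂, rfl⟩ | ⟨a₂, ha₂, rfl⟩
  · obtain ⟨g, hg, hgx⟩ := hX x₁ x₂ (ne_of_apply_ne _ hne)
    obtain ⟨φ, hφ, rfl⟩ := exists_continuous_comp_inr_eq f hB hf hg
    exact ⟨φ, hφ, hgx⟩
  · obtain ⟨φ, hφ, hne'⟩ := sep_inl_inr a₂ ha₂ x₁
    exact ⟨φ, hφ, hne'.symm⟩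
  · exact sep_inl_inr a₁ ha₁ x₂
  · have ha₁' : a₁ ∉ B ∪ {a₂} := fun h => h.elim ha₁ fun h => hne (congrArg (inl f) h)
    obtain ⟨φ, hφ, h1, h0, -⟩ :=
      exists_continuous_inl_eq_one f (hB.union isClosed_singleton) subset_union_left ha₁'
    exact ⟨φ, hφ, by rw [h1, h0 a₂ (.inr rfl)]; exact one_ne_zero⟩

end AdjunctionSpace

theorem exists_extension_of_neighborhood_retract {X Y A : Type*} [TopologicalSpace X]
    [TopologicalSpace Y] [TopologicalSpace A] {e : X → Y} (he : IsEmbedding e) {N : Set Y}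
    (hN : ∀ y ∈ range e, N ∈ 𝓝 y) {r : N → Y} (hr : Continuous r) (hr_mem : ∀ z, r z ∈ range e)
    (hr_id : ∀ z : N, (z : Y) ∈ range e → r z = z) {j : A → Y} (hj : Continuous j) {B : Set A}
    {f : B → X} (hjf : ∀ b : B, j b = e (f b)) :
    ∃ N' : Set A, IsOpen N' ∧ B ⊆ N' ∧ ∃ g : N' → X, Continuous g ∧
      ∀ (a : A) (hB : a ∈ B) (hN : a ∈ N'), g ⟨a, hN⟩ = f ⟨a, hB⟩ := by
  have hNint : range e ⊆ interior N := fun y hy => mem_interior_iff_mem_nhds.2 (hN y hy)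
  let ε := he.toHomeomorph
  refine ⟨j ⁻¹' interior N, isOpen_interior.preimage hj,
    fun b hb => hNint (hjf ⟨b, hb⟩ ▸ mem_range_self _),
    fun z => ε.symm ⟨r ⟨j z, interior_subset z.2⟩, hr_mem _⟩,
    ε.symm.continuous.comp ((hr.comp ((hj.comp continuous_subtype_val).subtype_mk _)).subtype_mk _),
    fun a ha _ => ε.symm_apply_eq.2 (Subtype.ext ?_)⟩
  exact (hr_id _ ⟨_, (hjf ⟨a, ha⟩).symm⟩).trans (hjf ⟨a, ha⟩)

theorem IsANRkw.isANEFor_compact {X : Type u} [TopologicalSpace X] (hXs : Submetrizable X)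
    (hX : IsANRkw.{u, max u v} X) :
    IsANEFor.{u, v} X fun A tA => @CompactSpace A tA ∧ @T2Space A tA := by
  obtain ⟨⟨-, D, hD⟩, hret⟩ := hX
  intro A _ ⟨_, _⟩ B hB f hf
  have hY : IsKOmega (AdjunctionSpace f) := ⟨AdjunctionSpace.t2Space f hB hf
    fun _ _ => hXs.exists_continuous_real_ne, _, AdjunctionSpace.isKOmegaSeq f hD⟩
  have he := AdjunctionSpace.isClosedEmbedding_inr f hB hf
  obtain ⟨N, hN, r, hr, hr_mem, hr_id⟩ := hret _ hY _ he
  exact exists_extension_of_neighborhood_retract he.isEmbedding hN hr hr_mem hr_id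
    (AdjunctionSpace.continuous_inl f) (AdjunctionSpace.inl_eq_inr f)

theorem IsANEFor.isANRkw {X : Type u} [TopologicalSpace X] (hXk : IsKOmega X)
    (hX : IsANEFor.{u, v} X fun A tA => @IsKOmega A tA) : IsANRkw.{u, v} X := by
  refine ⟨hXk, fun Y _ hY e he => ?_⟩
  let ε := he.isEmbedding.toHomeomorph
  obtain ⟨N, hN, heN, g, hg, hgε⟩ := hX Y hY (range e) he.isClosed_range ε.symm ε.symm.continuous
  refine ⟨N, fun y hy => hN.mem_nhds (heN hy), e ∘ g, he.continuous.comp hg,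
    fun _ => mem_range_self _, fun z hz => ?_⟩
  rw [Function.comp_apply, hgε z hz z.2]
  exact congrArg Subtype.val (ε.apply_symm_apply ⟨z, hz⟩)

/-- Characterization of submetrizable `ANR(k_ω)`-spaces: for a submetrizable `k_ω`-space `X`,
being an `ANR(k_ω)` is equivalent to being an ANE for the class of `k_ω`-spaces, which in turn
is equivalent to being an ANE for the class of compact metrizable spaces. -/
theorem ANRkw_characterization
    (X : Type u) [TopologicalSpace X] (hXk : IsKOmega X) (hXs : Submetrizable X) :
    (IsANRkw.{u, u} X ↔ IsANEFor.{u, u} X fun A tA => @IsKOmega A tA) ∧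
    ((IsANEFor.{u, u} X fun A tA => @IsKOmega A tA) ↔
      IsANEFor.{u, u} X fun A tA => @CompactSpace A tA ∧ @MetrizableSpace A tA) :=
  ⟨⟨fun h => (h.isANEFor_compact hXs).isKOmega_of_compact, IsANEFor.isANRkw hXk⟩,
    ⟨fun h => h.mono fun A _ ⟨_, _⟩ => isKOmega_of_compactSpace A,
      fun h => (h.compact_of_compact_metrizable hXs).isKOmega_of_compact⟩⟩
end

section
/- Let X be a Hausdorff topological space admitting a non-decreasing sequence (X_n)_{n∈ω} of compact subsets with X = ⋃_n X_n such that a subset U ⊆ X is open if and only if U ∩ X_n is open in X_n for every n, and suppose each X_n is a compact metrizable space that is an ANE for the class of metrizable spaces (a compact ANR). Then X is an absolute neighborhood extensor for the class of compact metrizable spaces (and hence, being submetrizable k_ω, an ANR(k_ω)). -/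
open Set Topology TopologicalSpace

universe u v

lemma isClosed_iff_of_kOmega {X : Type*} [TopologicalSpace X] {C : ℕ → Set X}
    (hC : IsKOmegaSeq X C) (F : Set X) :
    IsClosed F ↔ ∀ n, IsClosed ((Subtype.val ⁻¹' F : Set (C n))) := by
  rw [← isOpen_compl_iff, hC.2.2.2]
  simp only [Set.preimage_compl, isOpen_compl_iff]

lemma compact_subset_kOmega {X : Type*} [TopologicalSpace X] [T2Space X] {C : ℕ → Set X}
    (hC : IsKOmegaSeq X C) {K : Set X} (hK : IsCompact K) : ∃ n, K ⊆ C n := by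
  by_contra h
  push_neg at h
  choose x hxK hxC using fun n => Set.not_subset.mp (h n)
  have key : ∀ j m, x j ∈ C m → j < m := by
    intro j m hjm
    by_contra hle
    push_neg at hle
    exact hxC j (hC.2.1 hle hjm)
  set T : ℕ → Set X := fun k => x '' {n | k ≤ n} with hT
  have hTfin : ∀ k m, (T k ∩ C m).Finite := by
    intro k m
    apply Set.Finite.subset ((Set.finite_Iio m).image x)
    rintro p ⟨⟨j, hj, rfl⟩, hpm⟩
    exact ⟨j, key j m hpm, rfl⟩
  have hTclosed : ∀ k, IsClosed (T k) := by
    intro k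
    rw [isClosed_iff_of_kOmega hC]
    intro n
    have heq : (Subtype.val ⁻¹' (T k) : Set (C n)) = Subtype.val ⁻¹' (T k ∩ C n) := by
      ext ⟨p, hp⟩; simp [hp]
    rw [heq]
    exact (Set.Finite.preimage (Subtype.val_injective.injOn) (hTfin k n)).isClosed
  have hTsub : ∀ k, T k ⊆ K := by rintro k p ⟨j, _, rfl⟩; exact hxK j
  have hTanti : ∀ k, T (k + 1) ⊆ T k := by
    rintro k p ⟨j, hj, rfl⟩
    exact ⟨j, Nat.le_of_succ_le hj, rfl⟩
  have hne : (⋂ k, T k).Nonempty :=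
    IsCompact.nonempty_iInter_of_sequence_nonempty_isCompact_isClosed T hTanti
      (fun k => ⟨x k, Set.mem_image_of_mem x (show k ≤ k from le_rfl)⟩)
      (hK.of_isClosed_subset (hTclosed 0) (hTsub 0)) hTclosed
  obtain ⟨p, hp⟩ := hne
  have hpuniv : p ∈ ⋃ m, C m := hC.2.2.1 ▸ Set.mem_univ p
  obtain ⟨m, hm⟩ := Set.mem_iUnion.mp hpuniv
  obtain ⟨j, hj, rfl⟩ := Set.mem_iInter.mp hp m
  exact absurd (key j m hm) (not_lt.mpr hj)

/-- If `X` is the direct limit of a `k_ω`-sequence consisting of compact metrizable ANE's for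
the class of metrizable spaces (compact ANR's), then `X` is an ANE for the class of compact
metrizable spaces. -/
theorem kOmega_limit_of_compact_ANRs_is_ANE
    (X : Type u) [TopologicalSpace X] [T2Space X]
    (C : ℕ → Set X) (hC : IsKOmegaSeq X C)
    (hmet : ∀ n, MetrizableSpace ↥(C n))
    (hane : ∀ n, IsANEFor.{u, u} ↥(C n) fun A tA => @MetrizableSpace A tA) :
    IsANEFor.{u, u} X fun A tA => @CompactSpace A tA ∧ @MetrizableSpace A tA := by
  intro A tA hPA B hB f hf
  obtain ⟨hcomp, hmetA⟩ := hPA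
  have hBc : CompactSpace B := isCompact_iff_compactSpace.mp hB.isCompact
  have hr : IsCompact (Set.range f) := isCompact_range hf
  obtain ⟨n, hn⟩ := compact_subset_kOmega hC hr
  let f' : B → C n := fun b => ⟨f b, hn (Set.mem_range_self b)⟩
  have hf' : Continuous f' := hf.subtype_mk _
  obtain ⟨N, hNopen, hBN, g, hg, hgf⟩ := hane n A hmetA B hB f' hf'
  refine ⟨N, hNopen, hBN, fun z => (g z : X), continuous_subtype_val.comp hg, ?_⟩
  intro a hBa hNa
  have := hgf a hBa hNa
  simpa [f'] using congrArg Subtype.val this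
end

section
/- If a submetrizable topological space X is an absolute neighborhood extensor for the class of compact metrizable spaces, then X is an absolute neighborhood extensor for the class of all compact Hausdorff spaces. -/
/-! Fix a continuous injection `ι` of `X` into a metric space. Given `f : B → X` on a closed
subset `B` of a compact Hausdorff space `A`, the compact set `ι (f B)` is separable, hence injects
continuously into `ℕ → ℝ`; by Tietze the resulting map `B → ℕ → ℝ` extends to `ρ : A → ℕ → ℝ`.
Now `f` is constant on the fibres of `ρ` and, `ρ` being a closed map on the compact set `B`, it
descends to a continuous map on `ρ B`. Extending that map over a neighbourhood of `ρ B` in the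
compact metrizable space `ρ A` and composing with `ρ` extends `f`. -/

open Set Topology TopologicalSpace

universe u v

open Function

theorem Submetrizable.exists_continuous_injective_metricSpace {X : Type u} [TopologicalSpace X]
    (hX : Submetrizable X) :
    ∃ (Y : Type u) (_ : MetricSpace Y) (ι : X → Y), Continuous ι ∧ Injective ι := by
  obtain ⟨m, hle, hm⟩ := hX
  exact ⟨X, @metrizableSpaceMetric X m hm, id, continuous_id_iff_le.mpr hle, injective_id⟩

theorem exists_continuous_injective_nat_real (Y : Type*) [MetricSpace Y] [SeparableSpace Y] :
    ∃ φ : Y → ℕ → ℝ, Continuous φ ∧ Injective φ :=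
  have hκ := kuratowskiEmbedding.isometry Y
  ⟨fun y => kuratowskiEmbedding Y y,
    (lp.uniformContinuous_coe.comp hκ.uniformContinuous).continuous,
    fun _ _ h => hκ.injective (lp.ext h)⟩

theorem exists_continuous_nat_real_factorsThrough {K X Y : Type*} [TopologicalSpace K]
    [CompactSpace K] [TopologicalSpace X] [MetricSpace Y] {ι : X → Y} (hι : Continuous ι)
    (hιinj : Injective ι) {f : K → X} (hf : Continuous f) :
    ∃ h : C(K, ℕ → ℝ), FactorsThrough f h := by
  have hιf : Continuous (ι ∘ f) := hι.comp hf
  have : SeparableSpace (range (ι ∘ f)) :=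
    (isCompact_range hιf).isSeparable.separableSpace
  obtain ⟨φ, hφ, hφinj⟩ := exists_continuous_injective_nat_real (range (ι ∘ f))
  exact ⟨⟨φ ∘ rangeFactorization (ι ∘ f), hφ.comp hιf.rangeFactorization⟩,
    fun _ _ hab => hιinj (congrArg Subtype.val (hφinj hab))⟩

theorem IsCompact.exists_lift_along_imageFactorization {A Z X : Type*} [TopologicalSpace A]
    [TopologicalSpace Z] [T2Space Z] [TopologicalSpace X] {B : Set A} (hB : IsCompact B)
    {ρ : A → Z} (hρ : Continuous ρ) {f : B → X} (hf : Continuous f)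
    (hfρ : FactorsThrough f (B.domRestrict ρ)) :
    ∃ g : C(ρ '' B, X), ∀ b : B, g (B.imageFactorization ρ b) = f b := by
  have : CompactSpace B := isCompact_iff_compactSpace.mp hB
  let q : C(B, ρ '' B) := ⟨B.imageFactorization ρ, (hρ.comp continuous_subtype_val).subtype_mk _⟩
  have hq : IsQuotientMap q :=
    q.continuous.isClosedMap.isQuotientMap q.continuous imageFactorization_surjective
  have hfq : FactorsThrough f q := fun a b hab => hfρ (congrArg Subtype.val hab)
  exact ⟨hq.lift ⟨f, hf⟩ hfq, fun b => DFunLike.congr_fun (hq.lift_comp ⟨f, hf⟩ hfq) b⟩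

theorem IsANEFor.exists_extension_of_factorsThrough {X : Type u} [TopologicalSpace X]
    (hX : IsANEFor.{u, v} X fun A tA => @CompactSpace A tA ∧ @MetrizableSpace A tA)
    {A A' : Type v} [TopologicalSpace A] [CompactSpace A] [TopologicalSpace A'] [CompactSpace A']
    [MetrizableSpace A'] {ρ : A → A'} (hρ : Continuous ρ) {B : Set A} (hB : IsClosed B)
    {f : B → X} (hf : Continuous f) (hfρ : FactorsThrough f (B.domRestrict ρ)) :
    ∃ N : Set A, IsOpen N ∧ B ⊆ N ∧ ∃ g : N → X, Continuous g ∧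
      ∀ (a : A) (ha : a ∈ B) (hN : a ∈ N), g ⟨a, hN⟩ = f ⟨a, ha⟩ := by
  obtain ⟨g, hg⟩ := hB.isCompact.exists_lift_along_imageFactorization hρ hf hfρ
  obtain ⟨N', hN'open, hBN', g', hg', hg'g⟩ :=
    hX A' ⟨‹_›, ‹_›⟩ _ (hB.isCompact.image hρ).isClosed g g.continuous
  refine ⟨ρ ⁻¹' N', hN'open.preimage hρ, fun a ha => hBN' (mem_image_of_mem ρ ha),
    fun a => g' ⟨ρ a, a.2⟩, hg'.comp ((hρ.comp continuous_subtype_val).subtype_mk _),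
    fun a ha hN => ?_⟩
  exact (hg'g _ (mem_image_of_mem ρ ha) hN).trans (hg ⟨a, ha⟩)

theorem IsANEFor.exists_extension_of_factorsThrough_metrizable {X : Type u} [TopologicalSpace X]
    (hX : IsANEFor.{u, v} X fun A tA => @CompactSpace A tA ∧ @MetrizableSpace A tA)
    {A : Type v} {Z : Type} [TopologicalSpace A] [CompactSpace A] [TopologicalSpace Z]
    [MetrizableSpace Z] {ρ : A → Z} (hρ : Continuous ρ) {B : Set A} (hB : IsClosed B)
    {f : B → X} (hf : Continuous f) (hfρ : FactorsThrough f (B.domRestrict ρ)) :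
    ∃ N : Set A, IsOpen N ∧ B ⊆ N ∧ ∃ g : N → X, Continuous g ∧
      ∀ (a : A) (ha : a ∈ B) (hN : a ∈ N), g ⟨a, hN⟩ = f ⟨a, ha⟩ := by
  have : CompactSpace (range ρ) := isCompact_iff_compactSpace.mp (isCompact_range hρ)
  have : CompactSpace (ULift.{v} (range ρ)) := Homeomorph.ulift.symm.compactSpace
  have : MetrizableSpace (ULift.{v} (range ρ)) := Homeomorph.ulift.isEmbedding.metrizableSpace
  refine hX.exists_extension_of_factorsThrough
    (continuous_uliftUp.comp hρ.rangeFactorization) hB hf fun a b hab => hfρ ?_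
  exact congrArg Subtype.val (congrArg ULift.down hab)

/-- A submetrizable ANE for the class of compact metrizable spaces is an ANE for the class of
all compact Hausdorff spaces. -/
theorem ANE_compact_metrizable_to_compact_Hausdorff
    (X : Type u) [TopologicalSpace X] (hXs : Submetrizable X)
    (h : IsANEFor.{u, v} X fun A tA => @CompactSpace A tA ∧ @MetrizableSpace A tA) :
    IsANEFor.{u, v} X fun A tA => @CompactSpace A tA ∧ @T2Space A tA := by
  obtain ⟨Y, _, ι, hι, hιinj⟩ := hXs.exists_continuous_injective_metricSpace
  rintro A _ ⟨_, _⟩ B hB f hf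
  have : CompactSpace B := isCompact_iff_compactSpace.mp hB.isCompact
  obtain ⟨k, hfk⟩ := exists_continuous_nat_real_factorsThrough hι hιinj hf
  obtain ⟨K, rfl⟩ := ContinuousMap.exists_restrict_eq hB k
  exact h.exists_extension_of_factorsThrough_metrizable K.continuous hB hf hfk
end

section
/- If a topological space X is an absolute neighborhood extensor for the class of compact Hausdorff spaces, then X is an absolute neighborhood extensor for the class of k_ω-spaces: for every k_ω-space A, every closed subset B ⊆ A, and every continuous map f : B → X, there is an open neighborhood N of B in A and a continuous map g : N → X extending f. -/
/-!
Let `C₀ ⊆ C₁ ⊆ ⋯` be a `k_ω`-sequence of `A`. Working in one compact Hausdorff space `Cₙ` at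
a time, we extend `f` over a compact set `Dₙ ⊆ Cₙ` containing `Uₙ ∩ Cₙ` for an open
`Uₙ ⊇ (B ∩ Cₙ) ∪ Dₙ₋₁`, agreeing with the previous extension on `Dₙ₋₁`. The ANE property of
`X` in `Cₙ` gives an extension over a relatively open neighbourhood, and separating two compact
sets of the Hausdorff space `A` shrinks it to a compact `Dₙ`. The union `N` of the sets
`Uₙ ∩ Cₙ` is open since the topology of `A` is coherent with `(Cₙ)`, and for the same reason
the glued map is continuous on `N`: near a point of `N ∩ Cₘ` it agrees on `N ∩ Cₘ` with a
single stage.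
-/

open Set Topology TopologicalSpace

universe u v

open Function

section Extension

variable {X : Type u} [TopologicalSpace X] {A : Type v} [TopologicalSpace A]

theorem Topology.IsEmbedding.continuousOn_extend_range {Z : Type*} [TopologicalSpace Z]
    {ι : Z → A} (hι : IsEmbedding ι) {g : Z → X} (hg : Continuous g) (φ : A → X) :
    ContinuousOn (extend ι g φ) (range ι) := by
  rw [← image_univ, hι.isInducing.continuousOn_image_iff, extend_comp hι.injective]
  exact hg.continuousOn

theorem Topology.IsCoherentWith.continuousOn_of_isOpen {S : Set (Set A)} (hS : IsCoherentWith S)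
    {N : Set A} (hN : IsOpen N) {G : A → X} (hG : ∀ s ∈ S, ContinuousOn G (N ∩ s)) :
    ContinuousOn G N := by
  refine (continuousOn_open_iff hN).2 fun t ht => hS.isOpen_iff.2 fun s hs => ?_
  obtain ⟨u, hu, hGu⟩ := continuousOn_iff'.1 (hG s hs) t ht
  convert (hu.inter hN).preimage continuous_subtype_val using 1
  ext ⟨a, ha⟩
  have := congrArg (a ∈ ·) hGu
  simp only [mem_inter_iff, mem_preimage, eq_iff_iff] at this ⊢
  tauto

theorem exists_extension_on_open_inter [T2Space A]
    (h : IsANEFor.{u, v} X fun A tA => @CompactSpace A tA ∧ @T2Space A tA)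
    {K E : Set A} (hK : IsCompact K) (hE : IsClosed E) (hEK : E ⊆ K) {φ : A → X}
    (hφ : ContinuousOn φ E) :
    ∃ V : Set A, IsOpen V ∧ E ⊆ V ∧ ∃ ψ : A → X, ContinuousOn ψ (V ∩ K) ∧ EqOn ψ φ E := by
  have : CompactSpace K := isCompact_iff_compactSpace.mp hK
  obtain ⟨N, hN, hEN, g, hg, hgφ⟩ := h K ⟨inferInstance, inferInstance⟩ (Subtype.val ⁻¹' E)
    (hE.preimage continuous_subtype_val) (fun z => φ z.1.1)
    (hφ.comp_continuous (continuous_subtype_val.comp continuous_subtype_val) fun z => z.2)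
  obtain ⟨V, hV, rfl⟩ := isOpen_induced_iff.mp hN
  let ι : (Subtype.val ⁻¹' V : Set K) → A := fun z => z.1.1
  have hι : IsEmbedding ι := IsEmbedding.subtypeVal.comp IsEmbedding.subtypeVal
  have hrange : range ι = V ∩ K := by
    ext a
    exact ⟨by rintro ⟨⟨⟨a, ha⟩, hV⟩, rfl⟩; exact ⟨hV, ha⟩, fun ⟨hV, ha⟩ => ⟨⟨⟨a, ha⟩, hV⟩, rfl⟩⟩
  refine ⟨V, hV, fun a ha => hEN (a := ⟨a, hEK ha⟩) ha, extend ι g φ,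
    hrange ▸ hι.continuousOn_extend_range hg φ, fun a ha => ?_⟩
  have hN : (⟨a, hEK ha⟩ : K) ∈ Subtype.val ⁻¹' V := hEN ha
  exact (hι.injective.extend_apply g φ ⟨_, hN⟩).trans (hgφ ⟨a, hEK ha⟩ ha hN)

theorem exists_compact_extension_of_isCompact [T2Space A]
    (h : IsANEFor.{u, v} X fun A tA => @CompactSpace A tA ∧ @T2Space A tA)
    {K E : Set A} (hK : IsCompact K) (hE : IsClosed E) (hEK : E ⊆ K) {φ : A → X}
    (hφ : ContinuousOn φ E) :
    ∃ (D U : Set A) (ψ : A → X), IsCompact D ∧ D ⊆ K ∧ IsOpen U ∧ E ⊆ U ∧ U ∩ K ⊆ D ∧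
      ContinuousOn ψ D ∧ EqOn ψ φ E := by
  obtain ⟨V, hV, hEV, ψ, hψ, hψφ⟩ := exists_extension_on_open_inter h hK hE hEK hφ
  obtain ⟨U, W, hU, hW, hEU, hKW, hUW⟩ := SeparatedNhds.of_isCompact_isCompact
    (hK.of_isClosed_subset hE hEK) (hK.diff hV)
    (disjoint_of_subset_left hEV disjoint_sdiff_right)
  refine ⟨K \ W, U, ψ, hK.diff hW, sdiff_subset, hU, hEU,
    fun a ⟨haU, haK⟩ => ⟨haK, hUW.notMem_of_mem_left haU⟩, hψ.mono ?_, hψφ⟩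
  rintro a ⟨haK, haW⟩
  by_contra haV
  exact haW (hKW ⟨haK, fun h => haV ⟨h, haK⟩⟩)

end Extension

/-- With `K = Cₙ`, `dom` and `nbhd` are the sets `Dₙ` and `Uₙ` of the construction. -/
structure PartialExtension_s14 {X : Type u} [TopologicalSpace X] {A : Type v} [TopologicalSpace A]
    (B : Set A) (F : A → X) (K : Set A) where
  dom : Set A
  nbhd : Set A
  toFun : A → X
  isCompact_dom : IsCompact dom
  dom_subset : dom ⊆ K
  isOpen_nbhd : IsOpen nbhd
  inter_subset_nbhd : B ∩ K ⊆ nbhd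
  nbhd_inter_subset : nbhd ∩ K ⊆ dom
  continuousOn : ContinuousOn toFun dom
  eqOn : EqOn toFun F (B ∩ dom)

namespace PartialExtension_s14

variable {X : Type u} [TopologicalSpace X] {A : Type v} [TopologicalSpace A] {B : Set A}
  {F : A → X}

def empty : PartialExtension_s14 B F ∅ where
  dom := ∅
  nbhd := ∅
  toFun := F
  isCompact_dom := isCompact_empty
  dom_subset := subset_rfl
  isOpen_nbhd := isOpen_empty
  inter_subset_nbhd := inter_subset_right
  nbhd_inter_subset := inter_subset_right
  continuousOn := continuousOn_empty F
  eqOn := fun _ ha => ha.2.elim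

theorem exists_extend_s14 [T2Space A]
    (h : IsANEFor.{u, v} X fun A tA => @CompactSpace A tA ∧ @T2Space A tA)
    (hB : IsClosed B) (hF : ContinuousOn F B) {K K' : Set A} (s : PartialExtension_s14 B F K)
    (hK' : IsCompact K') (hKK' : K ⊆ K') :
    ∃ t : PartialExtension_s14 B F K', s.dom ⊆ t.nbhd ∧ EqOn t.toFun s.toFun s.dom := by
  classical
  set φ := s.dom.piecewise s.toFun F
  have hφF : EqOn φ F (B ∩ K') := fun a ha => by
    by_cases hs : a ∈ s.dom
    · exact (piecewise_eq_of_mem _ _ _ hs).trans (s.eqOn ⟨ha.1, hs⟩)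
    · exact piecewise_eq_of_notMem _ _ _ hs
  have hφs : EqOn φ s.toFun s.dom := fun a ha => piecewise_eq_of_mem _ _ _ ha
  have hφ : ContinuousOn φ (B ∩ K' ∪ s.dom) :=
    ((hF.mono inter_subset_left).congr hφF).union_of_isClosed (s.continuousOn.congr hφs)
      (hB.inter hK'.isClosed) s.isCompact_dom.isClosed
  obtain ⟨D, U, ψ, hD, hDK', hU, hEU, hUD, hψ, hψφ⟩ := exists_compact_extension_of_isCompact h
    hK' ((hB.inter hK'.isClosed).union s.isCompact_dom.isClosed)
    (union_subset inter_subset_right (s.dom_subset.trans hKK')) hφ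
  refine ⟨⟨D, U, ψ, hD, hDK', hU, subset_union_left.trans hEU, hUD, hψ, fun a ha => ?_⟩,
    subset_union_right.trans hEU, fun a ha => (hψφ (Or.inr ha)).trans (hφs ha)⟩
  have ha' : a ∈ B ∩ K' := ⟨ha.1, hDK' ha.2⟩
  exact (hψφ (Or.inl ha')).trans (hφF ha')

end PartialExtension_s14

structure ExtensionTower {X : Type u} [TopologicalSpace X] {A : Type v} [TopologicalSpace A]
    (B : Set A) (F : A → X) (C : ℕ → Set A) where
  stage : ∀ n, PartialExtension_s14 B F (C n)
  dom_subset_nbhd : ∀ n, (stage n).dom ⊆ (stage (n + 1)).nbhd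
  eqOn_succ : ∀ n, EqOn (stage (n + 1)).toFun (stage n).toFun (stage n).dom

namespace ExtensionTower

variable {X : Type u} [TopologicalSpace X] {A : Type v} [TopologicalSpace A] {B : Set A}
  {F : A → X} {C : ℕ → Set A}

theorem nonempty [T2Space A]
    (h : IsANEFor.{u, v} X fun A tA => @CompactSpace A tA ∧ @T2Space A tA)
    (hB : IsClosed B) (hF : ContinuousOn F B) (hcomp : ∀ n, IsCompact (C n)) (hC : Monotone C) :
    Nonempty (ExtensionTower B F C) := by
  choose next hnext using fun n (s : PartialExtension_s14 B F (C n)) =>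
    s.exists_extend_s14 h hB hF (hcomp (n + 1)) (hC n.le_succ)
  obtain ⟨s₀, -⟩ := PartialExtension_s14.empty.exists_extend_s14 h hB hF (hcomp 0) (empty_subset _)
  let stage : ∀ n, PartialExtension_s14 B F (C n) := fun n => Nat.rec s₀ next n
  exact ⟨stage, fun n => (hnext n (stage n)).1, fun n => (hnext n (stage n)).2⟩

variable (T : ExtensionTower B F C)

theorem monotone_dom (hC : Monotone C) : Monotone fun n => (T.stage n).dom :=
  monotone_nat_of_le_succ fun n _ ha => (T.stage (n + 1)).nbhd_inter_subset
    ⟨T.dom_subset_nbhd n ha, hC n.le_succ ((T.stage n).dom_subset ha)⟩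

theorem monotone_nbhd_inter (hC : Monotone C) : Monotone fun n => (T.stage n).nbhd ∩ C n :=
  monotone_nat_of_le_succ fun n _ ha =>
    ⟨T.dom_subset_nbhd n ((T.stage n).nbhd_inter_subset ha), hC n.le_succ ha.2⟩

theorem eqOn_of_le (hC : Monotone C) {m n : ℕ} (hmn : m ≤ n) :
    EqOn (T.stage n).toFun (T.stage m).toFun (T.stage m).dom := by
  induction n, hmn using Nat.le_induction with
  | base => exact eqOn_refl _ _
  | succ n hmn ih => exact fun a ha => (T.eqOn_succ n (T.monotone_dom hC hmn ha)).trans (ih ha)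

open Classical in
noncomputable def glue : A → X := fun a =>
  if h : ∃ n, a ∈ (T.stage n).dom then (T.stage (Nat.find h)).toFun a else F a

open Classical in
theorem glue_eqOn (hC : Monotone C) (n : ℕ) : EqOn T.glue (T.stage n).toFun (T.stage n).dom :=
  fun a ha => by
    have h : ∃ n, a ∈ (T.stage n).dom := ⟨n, ha⟩
    rw [glue, dif_pos h]
    exact (T.eqOn_of_le hC (Nat.find_min' h ha) (Nat.find_spec h)).symm

def domain : Set A := ⋃ n, (T.stage n).nbhd ∩ C n

theorem exists_le_mem_of_mem_domain (hC : Monotone C) {a : A} (ha : a ∈ T.domain) (m : ℕ) :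
    ∃ n ≥ m, a ∈ (T.stage n).nbhd ∩ C n := by
  obtain ⟨k, hk⟩ := mem_iUnion.1 ha
  exact ⟨max k m, le_max_right k m, T.monotone_nbhd_inter hC (le_max_left k m) hk⟩

theorem isOpen_domain (hC : Monotone C) (hcoh : IsCoherentWith (range C)) : IsOpen T.domain := by
  refine hcoh.isOpen_iff.2 ?_
  rintro _ ⟨m, rfl⟩
  convert (isOpen_biUnion (s := Ici m) fun n _ => (T.stage n).isOpen_nbhd).preimage
    continuous_subtype_val using 1
  ext ⟨a, ha⟩
  simp only [mem_preimage, mem_iUnion₂, mem_Ici]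
  constructor
  · intro haD
    obtain ⟨n, hmn, haU, -⟩ := T.exists_le_mem_of_mem_domain hC haD m
    exact ⟨n, hmn, haU⟩
  · rintro ⟨n, hmn, haU⟩
    exact mem_iUnion.2 ⟨n, haU, hC hmn ha⟩

theorem continuousOn_glue (hC : Monotone C) (hcoh : IsCoherentWith (range C)) :
    ContinuousOn T.glue T.domain := by
  refine hcoh.continuousOn_of_isOpen (T.isOpen_domain hC hcoh) ?_
  rintro _ ⟨m, rfl⟩ a ⟨haD, -⟩
  obtain ⟨n, hmn, haU, haC⟩ := T.exists_le_mem_of_mem_domain hC haD m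
  have hdom : (T.stage n).dom ∈ 𝓝[T.domain ∩ C m] a :=
    Filter.mem_of_superset (inter_mem_nhdsWithin _ ((T.stage n).isOpen_nbhd.mem_nhds haU))
      fun x hx => (T.stage n).nbhd_inter_subset ⟨hx.2, hC hmn hx.1.2⟩
  have haD' := (T.stage n).nbhd_inter_subset ⟨haU, haC⟩
  exact (((T.stage n).continuousOn a haD').congr (T.glue_eqOn hC n)
    (T.glue_eqOn hC n haD')).mono_of_mem_nhdsWithin hdom

theorem subset_domain (hcover : ⋃ n, C n = univ) : B ⊆ T.domain := fun a ha => by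
  obtain ⟨n, hn⟩ := iUnion_eq_univ_iff.1 hcover a
  exact mem_iUnion.2 ⟨n, (T.stage n).inter_subset_nbhd ⟨ha, hn⟩, hn⟩

theorem glue_eqOn_of_iUnion_eq_univ (hC : Monotone C) (hcover : ⋃ n, C n = univ) :
    EqOn T.glue F B := fun a ha => by
  obtain ⟨n, hn⟩ := iUnion_eq_univ_iff.1 hcover a
  have haD := (T.stage n).nbhd_inter_subset ⟨(T.stage n).inter_subset_nbhd ⟨ha, hn⟩, hn⟩
  exact (T.glue_eqOn hC n haD).trans ((T.stage n).eqOn ⟨ha, haD⟩)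

end ExtensionTower

theorem IsKOmegaSeq.isCoherentWith {A : Type v} [TopologicalSpace A] {C : ℕ → Set A}
    (hC : IsKOmegaSeq A C) : IsCoherentWith (range C) :=
  ⟨fun u hu => (hC.2.2.2 u).2 fun n => hu _ ⟨n, rfl⟩⟩

theorem IsKOmegaSeq.exists_continuousOn_extension {X : Type u} [TopologicalSpace X]
    {A : Type v} [TopologicalSpace A] [T2Space A]
    (h : IsANEFor.{u, v} X fun A tA => @CompactSpace A tA ∧ @T2Space A tA)
    {C : ℕ → Set A} (hC : IsKOmegaSeq A C) {B : Set A} (hB : IsClosed B) {F : A → X}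
    (hF : ContinuousOn F B) :
    ∃ N : Set A, IsOpen N ∧ B ⊆ N ∧ ∃ G : A → X, ContinuousOn G N ∧ EqOn G F B := by
  have hcoh := hC.isCoherentWith
  obtain ⟨hcomp, hmono, hcover, -⟩ := hC
  obtain ⟨T⟩ := ExtensionTower.nonempty h hB hF hcomp hmono
  exact ⟨T.domain, T.isOpen_domain hmono hcoh, T.subset_domain hcover, T.glue,
    T.continuousOn_glue hmono hcoh, T.glue_eqOn_of_iUnion_eq_univ hmono hcover⟩

/-- An ANE for the class of compact Hausdorff spaces is an ANE for the class of `k_ω`-spaces: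
every continuous map to `X` from a closed subset `B` of a `k_ω`-space `A` extends continuously
over an open neighborhood of `B` in `A`. -/
theorem ANE_compact_Hausdorff_to_ANE_kOmega
    (X : Type u) [TopologicalSpace X]
    (h : IsANEFor.{u, v} X fun A tA => @CompactSpace A tA ∧ @T2Space A tA) :
    ∀ (A : Type v) [TopologicalSpace A], IsKOmega A → ∀ B : Set A, IsClosed B →
      ∀ f : B → X, Continuous f → ∃ N : Set A, IsOpen N ∧ B ⊆ N ∧
        ∃ g : N → X, Continuous g ∧
          ∀ (a : A) (hB : a ∈ B) (hN : a ∈ N), g ⟨a, hN⟩ = f ⟨a, hB⟩ := by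
  intro A _ ⟨_, C, hC⟩ B hB f hf
  rcases isEmpty_or_nonempty X with hX | ⟨⟨x₀⟩⟩
  · exact ⟨∅, isOpen_empty, fun a ha => isEmptyElim (f ⟨a, ha⟩), isEmptyElim,
      continuous_of_discreteTopology, fun _ _ hN => hN.elim⟩
  have hfF : ∀ a (ha : a ∈ B), extend Subtype.val f (fun _ => x₀) a = f ⟨a, ha⟩ :=
    fun a ha => Subtype.val_injective.extend_apply f _ ⟨a, ha⟩
  have hF : ContinuousOn (extend Subtype.val f fun _ => x₀) B := by
    simpa using IsEmbedding.subtypeVal.continuousOn_extend_range hf fun _ => x₀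
  obtain ⟨N, hN, hBN, G, hG, hGF⟩ := hC.exists_continuousOn_extension h hB hF
  exact ⟨N, hN, hBN, N.domRestrict G, hG.domRestrict, fun a ha _ => (hGF ha).trans (hfF a ha)⟩
end

section
/- Let E be a continuous signature and X a topological E-algebra. For every compact subset L ⊆ E, every compact subset Z ⊆ X and every n ∈ ω, the set ⟨Z⟩^L_n is a compact subset of X; consequently ⟨Z⟩^L_ω = ⋃_{n∈ω} ⟨Z⟩^L_n is σ-compact. -/
open Set Topology TopologicalSpace

universe u v

variable {E : ℕ → Type u} [∀ n, TopologicalSpace (E n)]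

/-! Each operation `Eₖ × Xᵏ → X` is continuous, so it maps the compact set
`(L ∩ Eₖ) × Cᵏ` onto a compact set; and a compact `L` meets only finitely many of the open
summands `Eₖ`, so one step of the hull is a finite union of such images. -/

section HullCompact

variable (X : TopAlg E) (L : Set (Σ n, E n))

def opImage (C : Set X.carrier) (k : ℕ) : Set X.carrier :=
  (fun p : E k × (Fin k → X.carrier) => X.op k p.1 p.2) ''
    {p | (⟨k, p.1⟩ : Σ n, E n) ∈ L ∧ ∀ i, p.2 i ∈ C}

theorem hullSeq_succ (Z : Set X.carrier) (n : ℕ) :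
    hullSeq X L Z (n + 1) = hullSeq X L Z n ∪ ⋃ k, opImage X L (hullSeq X L Z n) k :=
  rfl

variable {X L}

theorem opImage_eq_empty_of_notMem {C : Set X.carrier} {k : ℕ}
    (hk : k ∉ Sigma.fst '' L) : opImage X L C k = ∅ :=
  image_eq_empty.2 <| eq_empty_of_forall_notMem fun _ hp => hk ⟨_, hp.1, rfl⟩

theorem isCompact_opImage (hL : IsCompact L) {C : Set X.carrier} (hC : IsCompact C)
    (k : ℕ) : IsCompact (opImage X L C k) := by
  have hdom : {p : E k × (Fin k → X.carrier) | (⟨k, p.1⟩ : Σ n, E n) ∈ L ∧ ∀ i, p.2 i ∈ C} =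
      (Sigma.mk k ⁻¹' L) ×ˢ univ.pi fun _ => C := by
    ext p
    simp
  rw [opImage, hdom]
  exact ((IsClosedEmbedding.sigmaMk.isCompact_preimage hL).prod
    (isCompact_univ_pi fun _ => hC)).image (X.cont k)

theorem isCompact_iUnion_opImage (hL : IsCompact L) {C : Set X.carrier}
    (hC : IsCompact C) : IsCompact (⋃ k, opImage X L C k) := by
  have hfin : (Sigma.fst '' L).Finite :=
    (hL.image (continuous_sigma fun _ => continuous_const)).finite_of_discrete
  have hunion : ⋃ k, opImage X L C k = ⋃ k ∈ Sigma.fst '' L, opImage X L C k := by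
    refine (iUnion₂_subset_iUnion _ _).antisymm' (iUnion_subset fun k => ?_)
    by_cases hk : k ∈ Sigma.fst '' L
    · exact subset_biUnion_of_mem (u := fun k => opImage X L C k) hk
    · simp [opImage_eq_empty_of_notMem hk]
  rw [hunion]
  exact hfin.isCompact_biUnion fun k _ => isCompact_opImage hL hC k

theorem isCompact_hullSeq (hL : IsCompact L) {Z : Set X.carrier} (hZ : IsCompact Z) (n : ℕ) :
    IsCompact (hullSeq X L Z n) := by
  induction n with
  | zero => exact hZ
  | succ n ih =>
    rw [hullSeq_succ]
    exact ih.union (isCompact_iUnion_opImage hL ih)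

end HullCompact

/-- For compact `L ⊆ E` and compact `Z ⊆ X`, each set `⟨Z⟩ᴸₙ` is compact, and hence
`⟨Z⟩ᴸ_ω = ⋃ₙ ⟨Z⟩ᴸₙ` is σ-compact. -/
theorem hullSeq_isCompact
    (E : ℕ → Type u) [∀ n, TopologicalSpace (E n)] (X : TopAlg E)
    (L : Set (Σ n, E n)) (hL : IsCompact L)
    (Z : Set X.carrier) (hZ : IsCompact Z) :
    (∀ n, IsCompact (hullSeq X L Z n)) ∧ IsSigmaCompact (⋃ n, hullSeq X L Z n) :=
  ⟨isCompact_hullSeq hL hZ, isSigmaCompact_iUnion_of_isCompact _ (isCompact_hullSeq hL hZ)⟩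
end

section
/- (Sakai, Closed Embedding Theorem) Every submetrizable k_ω-space is homeomorphic to a closed subspace of Q^∞. -/
/-!
Fix a metric `d` on `X` coarser than its topology. Since `X = ⋃ Xₙ` is σ-compact, `(X, d)` is
separable; let `(u k)` be dense. The coordinates `min 1 (d x (u k))` separate points, and the
coordinates `(n + 1) · min 1 (j · d(x, Xₙ))` vanish on `Xₙ` and, for `x ∉ Xₙ`, equal `n + 1` once
`j` is large. So the resulting continuous injection `X → ℝ^ω` maps `Xₙ` into `[-n-1, n+1]^ω` and
pulls `[-n, n]^ω` back into `Xₙ`; the first property makes it continuous into `Q^∞`, and the second,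
with compactness of `Xₙ`, makes it closed.
-/

open Set Topology TopologicalSpace

universe u v

/-- The set of bounded real sequences. -/
def QInfSet : Set (ℕ → ℝ) := {x | ∃ M : ℝ, ∀ i, |x i| ≤ M}

/-- The cube `[-n,n]^ω`, carrying the (compact) subspace topology of the product `ℝ^ω`. -/
def QCube (n : ℕ) : Set (ℕ → ℝ) := {x | ∀ i, |x i| ≤ (n : ℝ)}

/-- The underlying set of `Q^∞`: all bounded real sequences. -/
def QInf : Type := QInfSet

/-- The inclusion of the cube `[-n,n]^ω` into `Q^∞`. -/
def QInf.incl (n : ℕ) (x : QCube n) : QInf := ⟨x.1, ⟨(n : ℝ), x.2⟩⟩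

/-- The direct limit topology on `Q^∞`: a set is open iff its intersection with each cube
`[-n,n]^ω` is open in that cube. -/
instance QInf.topologicalSpace : TopologicalSpace QInf :=
  ⨆ n : ℕ, TopologicalSpace.coinduced (QInf.incl n) inferInstance

/-- A `Q^∞`-manifold: a Lindelöf space in which every point has a neighborhood
homeomorphic to an open subset of `Q^∞`. -/
def IsQInfManifold (M : Type u) [TopologicalSpace M] : Prop :=
  LindelofSpace M ∧ ∀ x : M, ∃ N : Set M, N ∈ nhds x ∧
    ∃ V : Set QInf, IsOpen V ∧ Nonempty (↥N ≃ₜ ↥V)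

namespace QInf

lemma isOpen_iff {U : Set QInf} : IsOpen U ↔ ∀ n, IsOpen (incl n ⁻¹' U) :=
  isOpen_iSup_iff.trans (forall_congr' fun _ => isOpen_coinduced)

lemma isClosed_iff {S : Set QInf} : IsClosed S ↔ ∀ n, IsClosed (incl n ⁻¹' S) := by
  simp only [← isOpen_compl_iff, isOpen_iff (U := Sᶜ), preimage_compl]

lemma continuous_incl (n : ℕ) : Continuous (incl n) :=
  continuous_iSup_rng continuous_coinduced_rng

end QInf

section KOmega

variable {X : Type u} [TopologicalSpace X] {C : ℕ → Set X}

lemma IsKOmegaSeq.continuous_of_forall_continuous_restrict {Z : Type*} [TopologicalSpace Z]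
    (hC : IsKOmegaSeq X C) {f : X → Z} (hf : ∀ n, Continuous fun x : C n => f x) :
    Continuous f :=
  continuous_def.2 fun V hV => (hC.2.2.2 _).2 fun n => (hf n).isOpen_preimage V hV

lemma IsKOmegaSeq.sigmaCompactSpace (hC : IsKOmegaSeq X C) : SigmaCompactSpace X :=
  SigmaCompactSpace_iff_exists_compact_covering.2 ⟨C, hC.1, hC.2.2.1⟩

theorem IsKOmegaSeq.exists_isClosedEmbedding_QInf (hC : IsKOmegaSeq X C) {g : X → ℕ → ℝ}
    (hg : Continuous g) (hinj : Function.Injective g)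
    (hbdd : ∀ n, ∃ m, MapsTo g (C n) (QCube m))
    (hproper : ∀ n, ∃ K, IsCompact K ∧ g ⁻¹' QCube n ⊆ K) :
    ∃ e : X → QInf, IsClosedEmbedding e := by
  have hmem : ∀ x, g x ∈ QInfSet := fun x => by
    obtain ⟨n, hn⟩ := mem_iUnion.1 (hC.2.2.1.symm ▸ mem_univ x)
    obtain ⟨m, hm⟩ := hbdd n
    exact ⟨m, hm hn⟩
  let e : X → QInf := fun x => ⟨g x, hmem x⟩
  have hcont : Continuous e := hC.continuous_of_forall_continuous_restrict fun n => by
    obtain ⟨m, hm⟩ := hbdd n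
    exact (QInf.continuous_incl m).comp
      ((hg.comp continuous_subtype_val).codRestrict fun x => hm x.2)
  have hclosed : IsClosedMap e := fun A hA => QInf.isClosed_iff.2 fun n => by
    obtain ⟨K, hK, hgK⟩ := hproper n
    have : QInf.incl n ⁻¹' (e '' A) = Subtype.val ⁻¹' (g '' (A ∩ K)) := by
      ext z
      constructor
      · rintro ⟨a, ha, hz⟩
        have hgz : g a = z.1 := congrArg Subtype.val hz
        exact ⟨a, ⟨ha, hgK (show g a ∈ QCube n from hgz ▸ z.2)⟩, hgz⟩
      · rintro ⟨a, ⟨ha, -⟩, hz⟩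
        exact ⟨a, ha, Subtype.ext hz⟩
    rw [this]
    exact ((hK.inter_left hA).image hg).isClosed.preimage continuous_subtype_val
  exact ⟨e, .of_continuous_injective_isClosedMap hcont
    (fun x y h => hinj (congrArg Subtype.val h)) hclosed⟩

end KOmega

section Sakai

open Metric

variable {Y : Type u} [MetricSpace Y]

noncomputable def sakaiCoord (D : ℕ → Set Y) (u : ℕ → Y) (x : Y) : ℕ ⊕ ℕ × ℕ → ℝ
  | .inl k => min 1 (dist x (u k))
  | .inr (n, j) => (n + 1) * min 1 (j * infDist x (D n))

variable {D : ℕ → Set Y} {u : ℕ → Y}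

lemma sakaiCoord_nonneg (x : Y) (s : ℕ ⊕ ℕ × ℕ) : 0 ≤ sakaiCoord D u x s := by
  rcases s with k | ⟨n, j⟩
  · exact le_min zero_le_one dist_nonneg
  · exact mul_nonneg (by positivity)
      (le_min zero_le_one (mul_nonneg j.cast_nonneg infDist_nonneg))

lemma sakaiCoord_le (hD : Monotone D) {x : Y} {k : ℕ} (hx : x ∈ D k)
    (s : ℕ ⊕ ℕ × ℕ) : sakaiCoord D u x s ≤ k + 1 := by
  rcases s with l | ⟨n, j⟩
  · have : (0 : ℝ) ≤ k := k.cast_nonneg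
    exact (min_le_left _ _).trans (by linarith)
  · rcases le_or_gt k n with hkn | hnk
    · simp only [sakaiCoord, infDist_zero_of_mem (hD hkn hx), mul_zero, min_eq_right zero_le_one]
      positivity
    · have hn : (n : ℝ) + 1 ≤ k := by exact_mod_cast hnk
      calc ((n : ℝ) + 1) * min 1 (j * infDist x (D n)) ≤ (n + 1) * 1 := by
            gcongr; exact min_le_left _ _
        _ ≤ k + 1 := by linarith

lemma exists_sakaiCoord_eq_of_notMem {n : ℕ} (hD : IsClosed (D n)) (hne : (D n).Nonempty)
    {x : Y} (hx : x ∉ D n) : ∃ s, sakaiCoord D u x s = n + 1 := by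
  have hpos : 0 < infDist x (D n) := (hD.notMem_iff_infDist_pos hne).1 hx
  obtain ⟨j, hj⟩ := exists_nat_ge (infDist x (D n))⁻¹
  have h1 : 1 ≤ (j : ℝ) * infDist x (D n) := by
    rwa [inv_le_iff_one_le_mul₀ hpos] at hj
  exact ⟨.inr (n, j), by simp [sakaiCoord, min_eq_left h1]⟩

lemma sakaiCoord_injective (hu : DenseRange u) : Function.Injective (sakaiCoord D u) := by
  intro x y hxy
  by_contra hne
  obtain ⟨k, hk⟩ := hu.exists_dist_lt x (lt_min (half_pos (dist_pos.2 hne)) one_pos)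
  have hxk : dist x (u k) < dist y (u k) := by
    linarith [dist_triangle_right x y (u k), min_le_left (dist x y / 2) 1]
  have hcoord := congrFun hxy (.inl k)
  simp only [sakaiCoord, min_eq_right (hk.le.trans (min_le_right _ _))] at hcoord
  exact (lt_min (hk.trans_le (min_le_right _ _)) hxk).ne hcoord

lemma continuous_sakaiCoord : Continuous (sakaiCoord D u) := by
  refine continuous_pi fun s => ?_
  rcases s with k | ⟨n, j⟩
  · exact continuous_const.min (continuous_id.dist continuous_const)
  · exact continuous_const.mul
      (continuous_const.min (continuous_const.mul (continuous_infDist_pt (D n))))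

noncomputable def sakaiMap (D : ℕ → Set Y) (u : ℕ → Y) (x : Y) (i : ℕ) : ℝ :=
  sakaiCoord D u x ((Denumerable.eqv (ℕ ⊕ ℕ × ℕ)).symm i)

lemma sakaiMap_mem_qCube (hD : Monotone D) {x : Y} {k : ℕ} (hx : x ∈ D k) :
    sakaiMap D u x ∈ QCube (k + 1) := fun i => by
  rw [sakaiMap, abs_of_nonneg (sakaiCoord_nonneg x _)]
  exact_mod_cast sakaiCoord_le hD hx _

lemma sakaiMap_preimage_qCube_subset {n : ℕ} (hD : IsClosed (D n))
    (hne : (D n).Nonempty) : sakaiMap D u ⁻¹' QCube n ⊆ D n := by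
  intro x hx
  by_contra hxD
  obtain ⟨s, hs⟩ := exists_sakaiCoord_eq_of_notMem (u := u) hD hne hxD
  have := hx (Denumerable.eqv _ s)
  simp only [sakaiMap, Equiv.symm_apply_apply, hs] at this
  rw [abs_of_nonneg (by positivity)] at this
  linarith

lemma sakaiMap_injective (hu : DenseRange u) : Function.Injective (sakaiMap D u) :=
  fun x y h => sakaiCoord_injective hu <| funext fun s => by
    simpa [sakaiMap] using congrFun h (Denumerable.eqv _ s)

lemma continuous_sakaiMap : Continuous (sakaiMap D u) :=
  continuous_pi fun _ => (continuous_apply _).comp continuous_sakaiCoord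

end Sakai

theorem Submetrizable.exists_continuous_bijective {X : Type u} [TopologicalSpace X]
    (h : Submetrizable X) :
    ∃ (Y : Type u) (_ : MetricSpace Y) (φ : X → Y), Continuous φ ∧ Function.Bijective φ := by
  obtain ⟨m, hle, hm⟩ := h
  exact ⟨X, @metrizableSpaceMetric X m hm, id, continuous_id_iff_le.2 hle, Function.bijective_id⟩

/-- Sakai's Closed Embedding Theorem: every submetrizable `k_ω`-space embeds as a closed
subspace of `Q^∞`. -/
theorem closed_embedding_into_QInf
    (X : Type u) [TopologicalSpace X] (hXk : IsKOmega X) (hXs : Submetrizable X) :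
    ∃ e : X → QInf, IsClosedEmbedding e := by
  obtain ⟨-, C, hC⟩ := hXk
  rcases isEmpty_or_nonempty X with hX | ⟨⟨x₀⟩⟩
  · exact ⟨isEmptyElim, .of_subsingleton _, by simp [range_eq_empty]⟩
  obtain ⟨Y, _, φ, hφ, hφinj, hφsurj⟩ := hXs.exists_continuous_bijective
  have := hC.sigmaCompactSpace
  have : SigmaCompactSpace Y :=
    isSigmaCompact_univ_iff.1 (hφsurj.range_eq ▸ isSigmaCompact_range hφ)
  have : Nonempty Y := ⟨φ x₀⟩
  obtain ⟨u, hu⟩ := exists_dense_seq Y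
  -- `infDist x ∅ = 0`, so `x₀` is added to make every `D n` nonempty.
  let K n := insert x₀ (C n)
  have hK n : IsCompact (K n) := (hC.1 n).insert x₀
  let D n := φ '' K n
  have hDmono : Monotone D := fun a b hab => image_mono (insert_subset_insert (hC.2.1 hab))
  have hDclosed n : IsClosed (D n) := ((hK n).image hφ).isClosed
  refine hC.exists_isClosedEmbedding_QInf (g := sakaiMap D u ∘ φ) (continuous_sakaiMap.comp hφ)
    ((sakaiMap_injective hu).comp hφinj) (fun n => ⟨n + 1, fun x hx => ?_⟩)
    fun n => ⟨K n, hK n, ?_⟩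
  · exact sakaiMap_mem_qCube hDmono (mem_image_of_mem φ (mem_insert_of_mem x₀ hx))
  · rw [preimage_comp, ← hφinj.preimage_image (K n)]
    exact preimage_mono <| sakaiMap_preimage_qCube_subset (hDclosed n)
      ⟨φ x₀, mem_image_of_mem φ (mem_insert x₀ _)⟩
end
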